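/- arXiv:1103.2899 — 8 statements merged into one kernel-verified Lean document; each statement's English description precedes it below -/
import Mathlib

section
/- Let N ≥ 1, k ≥ 1, let V_1,…,V_k be an orthonormal family in ℂ^N spanning a subspace V, let ξ_1,…,ξ_k be an orthonormal family in ℂ^N spanning a subspace E, let α ≥ 0 and α_1,…,α_k ≥ 0. Define a = ∑_{m=1}^{k} | |⟨ξ_m, V_m⟩|² − α_m | + 2 ∑_{m=1}^{k} ∑_{n≠m} |⟨ξ_n, V_m⟩| + ∑_{m=1}^{k} ( ∑_{n≠m} |⟨ξ_n, V_m⟩| )². Then for every unit vector u ∈ ℂ^N, | ‖P_V u‖₂² − α | ≤ (2k + α) ‖P_{E^⊥} u‖₂ + max_{1≤m≤k} |α_m − α| + a. -/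
open scoped InnerProductSpace

/-!
Write u = q + w with q = P_E u = ∑ ⟨ξ_n, u⟩ ξ_n and ‖w‖ = ε := ‖P_{E^⊥} u‖, so that
∑ |⟨ξ_n, u⟩|² = 1 - ε². Replacing u by q changes ‖P_V ·‖² by at most 2ε. The m-th coordinate
⟨V_m, q⟩ of P_V q is ⟨ξ_m, u⟩⟨V_m, ξ_m⟩ up to the off-diagonal terms, so ‖P_V q‖² is the
weighted sum ∑ |⟨ξ_m, u⟩|² |⟨ξ_m, V_m⟩|² up to the last two sums of `a`. Moving each
|⟨ξ_m, V_m⟩|² to α_m and then to α costs the first sum of `a` and the maximum; since the weights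
sum to 1 - ε² rather than 1, there is a final error α ε² ≤ α ε.
-/

open Finset Submodule

lemma abs_sq_sub_sq_le_two_mul_abs_sub {a b : ℝ} (ha : 0 ≤ a) (hb : 0 ≤ b) (ha1 : a ≤ 1)
    (hb1 : b ≤ 1) : |a ^ 2 - b ^ 2| ≤ 2 * |a - b| := by
  rw [sq_sub_sq, abs_mul, abs_of_nonneg (add_nonneg ha hb)]
  gcongr
  linarith

lemma abs_sq_sub_sq_le_of_abs_sub_le {a b s : ℝ} (ha : 0 ≤ a) (hb : 0 ≤ b) (hb1 : b ≤ 1)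
    (h : |a - b| ≤ s) : |a ^ 2 - b ^ 2| ≤ 2 * s + s ^ 2 := by
  have hab : a + b ≤ 2 + s := by linarith [le_of_abs_le h]
  rw [sq_sub_sq, abs_mul, abs_of_nonneg (add_nonneg ha hb)]
  nlinarith [abs_nonneg (a - b)]

lemma abs_sum_mul_sub_le {ι : Type*} [Fintype ι] {w a b : ι → ℝ} {α M : ℝ}
    (hw : ∀ i, 0 ≤ w i) (hw1 : ∑ i, w i ≤ 1) (hM : ∀ i, |b i - α| ≤ M) (hM0 : 0 ≤ M) :
    |∑ i, w i * a i - α| ≤ ∑ i, |a i - b i| + M + |α| * (1 - ∑ i, w i) := by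
  have hwi : ∀ i, w i ≤ 1 := fun i =>
    (single_le_sum (fun j _ => hw j) (mem_univ i)).trans hw1
  have hsplit : ∑ i, w i * a i - α =
      ∑ i, w i * (a i - b i) + ∑ i, w i * (b i - α) - α * (1 - ∑ i, w i) := by
    simp only [mul_sub, sum_sub_distrib, ← sum_mul]
    ring
  have h1 : |∑ i, w i * (a i - b i)| ≤ ∑ i, |a i - b i| :=
    (abs_sum_le_sum_abs _ _).trans <| sum_le_sum fun i _ => by
      rw [abs_mul, abs_of_nonneg (hw i)]
      exact mul_le_of_le_one_left (abs_nonneg _) (hwi i)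
  have h2 : |∑ i, w i * (b i - α)| ≤ M :=
    calc |∑ i, w i * (b i - α)| ≤ ∑ i, w i * M :=
          (abs_sum_le_sum_abs _ _).trans <| sum_le_sum fun i _ => by
            rw [abs_mul, abs_of_nonneg (hw i)]
            exact mul_le_mul_of_nonneg_left (hM i) (hw i)
      _ = (∑ i, w i) * M := (sum_mul _ _ _).symm
      _ ≤ M := mul_le_of_le_one_left hM0 hw1
  have h3 : |α * (1 - ∑ i, w i)| = |α| * (1 - ∑ i, w i) := by
    rw [abs_mul, abs_of_nonneg (sub_nonneg.2 hw1)]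
  rw [hsplit]
  linarith [abs_sub (∑ i, w i * (a i - b i) + ∑ i, w i * (b i - α)) (α * (1 - ∑ i, w i)),
    abs_add_le (∑ i, w i * (a i - b i)) (∑ i, w i * (b i - α))]

variable {𝕜 E ι : Type*} [RCLike 𝕜] [NormedAddCommGroup E] [InnerProductSpace 𝕜 E] [Fintype ι]

namespace Orthonormal

variable {v : ι → E}

theorem starProjection_span_eq_sum (hv : Orthonormal 𝕜 v)
    [(span 𝕜 (Set.range v)).HasOrthogonalProjection] (x : E) :
    (span 𝕜 (Set.range v)).starProjection x = ∑ i, ⟪v i, x⟫_𝕜 • v i := by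
  refine eq_starProjection_of_mem_orthogonal
    (sum_mem fun i _ => smul_mem _ _ (subset_span (Set.mem_range_self i))) ?_
  have h : span 𝕜 (Set.range v) ⟂ 𝕜 ∙ (x - ∑ i, ⟪v i, x⟫_𝕜 • v i) := by
    refine isOrtho_span.2 ?_
    rintro _ ⟨i, rfl⟩ _ rfl
    rw [inner_sub_right, hv.inner_right_fintype, sub_self]
  exact h.symm (mem_span_singleton_self _)

theorem norm_sum_smul_sq (hv : Orthonormal 𝕜 v) (c : ι → 𝕜) :
    ‖∑ i, c i • v i‖ ^ 2 = ∑ i, ‖c i‖ ^ 2 := by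
  rw [← inner_self_eq_norm_sq (𝕜 := 𝕜), hv.inner_sum, map_sum]
  simp only [RCLike.conj_mul, ← RCLike.ofReal_pow, RCLike.ofReal_re]

end Orthonormal

theorem Submodule.abs_norm_starProjection_sq_sub_le (K : Submodule 𝕜 E)
    [K.HasOrthogonalProjection] {x y : E} (hx : ‖x‖ ≤ 1) (hy : ‖y‖ ≤ 1) :
    |‖K.starProjection x‖ ^ 2 - ‖K.starProjection y‖ ^ 2| ≤ 2 * ‖x - y‖ :=
  calc |‖K.starProjection x‖ ^ 2 - ‖K.starProjection y‖ ^ 2|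
      ≤ 2 * |‖K.starProjection x‖ - ‖K.starProjection y‖| :=
        abs_sq_sub_sq_le_two_mul_abs_sub (norm_nonneg _) (norm_nonneg _)
          ((K.norm_starProjection_apply_le x).trans hx)
          ((K.norm_starProjection_apply_le y).trans hy)
    _ ≤ 2 * ‖K.starProjection (x - y)‖ := by
        rw [map_sub]
        gcongr
        exact abs_norm_sub_norm_le _ _
    _ ≤ 2 * ‖x - y‖ := by grw [K.norm_starProjection_apply_le]

theorem abs_norm_inner_sum_smul_sub_le [DecidableEq ι] (w : E) (ξ : ι → E) {c : ι → 𝕜}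
    (hc : ∀ n, ‖c n‖ ≤ 1) (m : ι) :
    |‖⟪w, ∑ n, c n • ξ n⟫_𝕜‖ - ‖c m‖ * ‖⟪ξ m, w⟫_𝕜‖| ≤ ∑ n ∈ univ.erase m, ‖⟪ξ n, w⟫_𝕜‖ := by
  have hsplit : ⟪w, ∑ n, c n • ξ n⟫_𝕜 =
      c m * ⟪w, ξ m⟫_𝕜 + ∑ n ∈ univ.erase m, c n * ⟪w, ξ n⟫_𝕜 := by
    simp only [inner_sum, inner_smul_right]
    exact (add_sum_erase _ _ (mem_univ m)).symm
  calc |‖⟪w, ∑ n, c n • ξ n⟫_𝕜‖ - ‖c m‖ * ‖⟪ξ m, w⟫_𝕜‖|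
      ≤ ‖∑ n ∈ univ.erase m, c n * ⟪w, ξ n⟫_𝕜‖ := by
        rw [hsplit, ← norm_inner_symm, ← norm_mul]
        exact (abs_norm_sub_norm_le _ _).trans_eq (by rw [add_sub_cancel_left])
    _ ≤ ∑ n ∈ univ.erase m, ‖⟪ξ n, w⟫_𝕜‖ :=
        (norm_sum_le _ _).trans <| sum_le_sum fun n _ => by
          rw [norm_mul, norm_inner_symm]
          exact mul_le_of_le_one_left (norm_nonneg _) (hc n)

theorem Orthonormal.abs_norm_starProjection_sum_sq_sub_le [DecidableEq ι] {V ξ : ι → E}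
    (hV : Orthonormal 𝕜 V) [(span 𝕜 (Set.range V)).HasOrthogonalProjection]
    (hξ : ∀ n, ‖ξ n‖ ≤ 1) {c : ι → 𝕜} (hc : ∀ n, ‖c n‖ ≤ 1) :
    |‖(span 𝕜 (Set.range V)).starProjection (∑ n, c n • ξ n)‖ ^ 2
        - ∑ m, ‖c m‖ ^ 2 * ‖⟪ξ m, V m⟫_𝕜‖ ^ 2|
      ≤ 2 * ∑ m, ∑ n ∈ univ.erase m, ‖⟪ξ n, V m⟫_𝕜‖
        + ∑ m, (∑ n ∈ univ.erase m, ‖⟪ξ n, V m⟫_𝕜‖) ^ 2 := by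
  rw [hV.starProjection_span_eq_sum, hV.norm_sum_smul_sq, ← sum_sub_distrib, mul_sum,
    ← sum_add_distrib]
  refine (abs_sum_le_sum_abs _ _).trans (sum_le_sum fun m _ => ?_)
  have hdiag : ‖c m‖ * ‖⟪ξ m, V m⟫_𝕜‖ ≤ 1 := by
    refine mul_le_one₀ (hc m) (norm_nonneg _) ((norm_inner_le_norm _ _).trans ?_)
    rw [hV.1 m, mul_one]
    exact hξ m
  rw [← mul_pow]
  exact abs_sq_sub_sq_le_of_abs_sub_le (norm_nonneg _) (by positivity) hdiag
    (abs_norm_inner_sum_smul_sub_le (V m) ξ hc m)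

theorem statement4_general {N k : ℕ} (hk : 1 ≤ k)
    (V ξ : Fin k → EuclideanSpace ℂ (Fin N))
    (hV : Orthonormal ℂ V) (hξ : Orthonormal ℂ ξ)
    (α : ℝ) (hα : 0 ≤ α) (αs : Fin k → ℝ)
    (u : EuclideanSpace ℂ (Fin N)) (hu : ‖u‖ = 1) :
    |‖(Submodule.orthogonalProjectionOnto (Submodule.span ℂ (Set.range V)) u : EuclideanSpace ℂ (Fin N))‖ ^ 2
        - α|
      ≤ (2 * k + α) *
          ‖(Submodule.orthogonalProjectionOnto (Submodule.span ℂ (Set.range ξ))ᗮ u :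
              EuclideanSpace ℂ (Fin N))‖
        + (⨆ m : Fin k, |αs m - α|)
        + ((∑ m : Fin k, |‖(inner ℂ (ξ m) (V m) : ℂ)‖ ^ 2 - αs m|)
            + 2 * ∑ m : Fin k, ∑ n ∈ Finset.univ.erase m, ‖(inner ℂ (ξ n) (V m) : ℂ)‖
            + ∑ m : Fin k, (∑ n ∈ Finset.univ.erase m, ‖(inner ℂ (ξ n) (V m) : ℂ)‖) ^ 2) := by
  simp only [← starProjection_apply]
  set ES := span ℂ (Set.range ξ)
  set q := ES.starProjection u
  set c : Fin k → ℂ := fun n => ⟪ξ n, u⟫_ℂ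
  set ε := ‖ESᗮ.starProjection u‖
  have hq : q = ∑ n, c n • ξ n := hξ.starProjection_span_eq_sum u
  have hc : ∀ n, ‖c n‖ ≤ 1 := fun n =>
    (norm_inner_le_norm _ _).trans_eq (by rw [hξ.1 n, hu, one_mul])
  have hpyth : ∑ n, ‖c n‖ ^ 2 = 1 - ε ^ 2 := by
    rw [← hξ.norm_sum_smul_sq, ← hq, eq_sub_iff_add_eq, ← one_pow 2, ← hu,
      norm_sq_eq_add_norm_sq_starProjection u ES]
  have hε : 0 ≤ ε := norm_nonneg _
  have hε1 : ε ≤ 1 := hu ▸ ESᗮ.norm_starProjection_apply_le u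
  have hcoefficients := hV.abs_norm_starProjection_sum_sq_sub_le (fun n => (hξ.1 n).le) hc
  rw [← hq] at hcoefficients
  set VS := span ℂ (Set.range V)
  have hprojection : |‖VS.starProjection u‖ ^ 2 - ‖VS.starProjection q‖ ^ 2| ≤ 2 * ε := by
    have h := VS.abs_norm_starProjection_sq_sub_le hu.le
      ((ES.norm_starProjection_apply_le u).trans hu.le)
    rwa [← starProjection_orthogonal_val] at h
  have hweights := abs_sum_mul_sub_le (a := fun m => ‖⟪ξ m, V m⟫_ℂ‖ ^ 2) (b := αs) (α := α)
    (fun n => sq_nonneg ‖c n‖) (hpyth ▸ sub_le_self _ (sq_nonneg ε))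
    (le_ciSup (Set.finite_range _).bddAbove) (Real.iSup_nonneg fun _ => abs_nonneg _)
  rw [hpyth, abs_of_nonneg hα] at hweights
  have hαε : α * ε ^ 2 ≤ α * ε :=
    mul_le_mul_of_nonneg_left (pow_le_of_le_one hε hε1 two_ne_zero) hα
  have hkε : ε ≤ k * ε := le_mul_of_one_le_left hε (by exact_mod_cast hk)
  linarith [abs_sub_le (‖VS.starProjection u‖ ^ 2) (‖VS.starProjection q‖ ^ 2) α,
    abs_sub_le (‖VS.starProjection q‖ ^ 2) (∑ m, ‖c m‖ ^ 2 * ‖⟪ξ m, V m⟫_ℂ‖ ^ 2) α]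

/-- Lemma `Proj`: quantitative comparison between the squared norm of the
projection of a unit vector `u` onto the span `V` of an orthonormal family `V_1,…,V_k`
and a reference value `α`, in terms of the projection of `u` on the orthogonal complement of
the span `E` of another orthonormal family `ξ_1,…,ξ_k`. -/
theorem statement4 {N k : ℕ} (hk : 1 ≤ k) (hN : 1 ≤ N)
    (V ξ : Fin k → EuclideanSpace ℂ (Fin N))
    (hV : Orthonormal ℂ V) (hξ : Orthonormal ℂ ξ)
    (α : ℝ) (hα : 0 ≤ α) (αs : Fin k → ℝ) (hαs : ∀ m, 0 ≤ αs m)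
    (u : EuclideanSpace ℂ (Fin N)) (hu : ‖u‖ = 1) :
    |‖(Submodule.orthogonalProjectionOnto (Submodule.span ℂ (Set.range V)) u : EuclideanSpace ℂ (Fin N))‖ ^ 2
        - α|
      ≤ (2 * k + α) *
          ‖(Submodule.orthogonalProjectionOnto (Submodule.span ℂ (Set.range ξ))ᗮ u :
              EuclideanSpace ℂ (Fin N))‖
        + (⨆ m : Fin k, |αs m - α|)
        + ((∑ m : Fin k, |‖(inner ℂ (ξ m) (V m) : ℂ)‖ ^ 2 - αs m|)
            + 2 * ∑ m : Fin k, ∑ n ∈ Finset.univ.erase m, ‖(inner ℂ (ξ n) (V m) : ℂ)‖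
            + ∑ m : Fin k, (∑ n ∈ Finset.univ.erase m, ‖(inner ℂ (ξ n) (V m) : ℂ)‖) ^ 2) :=
  statement4_general hk V ξ hV hξ α hα αs u hu
end

section
/- Let M and M′ be N×N Hermitian matrices with ‖M − M′‖ ≤ f in operator norm, let ρ ∈ ℝ, δ₀ > 0, and let n ≥ 0, k ≥ 1 with n + k ≤ N. Suppose that every eigenvalue λ_i(M′) with i ∉ {n+1,…,n+k} satisfies |λ_i(M′) − ρ| > δ₀/2. Let E be the subspace of ℂ^N spanned by an orthonormal family of eigenvectors of M′ associated with the eigenvalues λ_{n+1}(M′),…,λ_{n+k}(M′). Then every unit eigenvector ξ of M associated with the eigenvalue λ_{n+l}(M), for some 1 ≤ l ≤ k, satisfies ‖P_{E^⊥} ξ‖₂ ≤ (2/δ₀) ( f + |λ_{n+l}(M) − ρ| ). -/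
open Matrix

/-- Eigenvalues of a Hermitian matrix in decreasing order (junk value `0` otherwise),
indexed by `Fin N`. -/
noncomputable def eigsDesc {N : ℕ} (A : Matrix (Fin N) (Fin N) ℂ) : Fin N → ℝ :=
  if h : A.IsHermitian then fun i => (h.eigenvalues ∘ Tuple.sort h.eigenvalues) i.rev
  else 0

/-- `eigVal A q` is the `q`-th largest eigenvalue of `A` (`1`-based indexing `λ_1 ≥ … ≥ λ_N`). -/
noncomputable def eigVal {N : ℕ} (A : Matrix (Fin N) (Fin N) ℂ) (q : ℕ) : ℝ :=
  if h : q - 1 < N then eigsDesc A ⟨q - 1, h⟩ else 0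

/-- Operator norm of a complex matrix, viewed as an operator on Euclidean space. -/
noncomputable def opNorm {N : ℕ} (M : Matrix (Fin N) (Fin N) ℂ) : ℝ :=
  ‖(Matrix.toEuclideanCLM (𝕜 := ℂ) M : EuclideanSpace ℂ (Fin N) →L[ℂ] EuclideanSpace ℂ (Fin N))‖

/-!
Write `S = M' - ρ` and `w = P_{E^⊥} ξ`. Being spanned by eigenvectors of `M'`, the space `E` is
`S`-invariant, hence so is `E^⊥`, and `S w` is the `E^⊥`-component of
`S ξ = (M' - M) ξ + (λ_{n+l}(M) - ρ) ξ`; thus `‖S w‖ ≤ f + |λ_{n+l}(M) - ρ|`.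

Conversely, every eigenvalue `μ` of `M'` with `|μ - ρ| ≤ δ₀/2` occurs in the ordered spectrum only
at positions `n+1, …, n+k`, so the `v_i` carrying the eigenvalue `μ` are at least as many as its
multiplicity and therefore span the whole eigenspace: it lies in `E`. Expanding `w ∈ E^⊥` in an
eigenbasis of `M'`, only eigenvalues with `|μ - ρ| > δ₀/2` contribute, so `‖S w‖ ≥ (δ₀/2) ‖w‖`.
-/

open InnerProductSpace

namespace Module.Basis

section CommSemiring

variable {ι R M : Type*} [CommSemiring R] [AddCommMonoid M] [Module R M]
  {T : M →ₗ[R] M} {γ : ι → R}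

theorem repr_apply_of_apply_eq_smul (b : Basis ι R M) (hT : ∀ i, T (b i) = γ i • b i)
    (x : M) (i : ι) : b.repr (T x) i = γ i * b.repr x i := by
  have : (b.coord i).comp T = γ i • b.coord i :=
    b.ext fun j => by
      by_cases h : j = i
      · subst h; simp [hT]
      · simp [hT, h]
  exact LinearMap.congr_fun this x

end CommSemiring

variable {ι K V : Type*} [Field K] [AddCommGroup V] [Module K V] {T : V →ₗ[K] V} {γ : ι → K}

theorem eigenspace_le_span_image (b : Basis ι K V) (hT : ∀ i, T (b i) = γ i • b i) (μ : K) :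
    Module.End.eigenspace T μ ≤ Submodule.span K (b '' {i | γ i = μ}) := by
  intro x hx
  rw [b.mem_span_image]
  intro i hi
  have hTx := congrArg (fun y => b.repr y i) (Module.End.mem_eigenspace_iff.1 hx)
  simp only [b.repr_apply_of_apply_eq_smul hT, map_smul, Finsupp.smul_apply, smul_eq_mul] at hTx
  exact mul_right_cancel₀ (Finsupp.mem_support_iff.1 hi) hTx

theorem finrank_eigenspace_le_card [Fintype ι] [DecidableEq K] (b : Basis ι K V)
    (hT : ∀ i, T (b i) = γ i • b i) (μ : K) :
    Module.finrank K (Module.End.eigenspace T μ) ≤ Fintype.card {i // γ i = μ} := by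
  have := Module.Finite.of_basis b
  calc Module.finrank K (Module.End.eigenspace T μ)
      ≤ Module.finrank K (Submodule.span K (b '' {i | γ i = μ})) :=
        Submodule.finrank_mono (b.eigenspace_le_span_image hT μ)
    _ ≤ Fintype.card {i // γ i = μ} := by
        rw [Set.image_eq_range]; exact finrank_range_le_card _

end Module.Basis

theorem Module.End.span_range_mem_invtSubmodule {ι R M : Type*} [Semiring R] [AddCommMonoid M]
    [Module R M] {T : Module.End R M} {v : ι → M} {c : ι → R} (hT : ∀ i, T (v i) = c i • v i) :
    Submodule.span R (Set.range v) ∈ T.invtSubmodule := by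
  rw [Module.End.mem_invtSubmodule, Submodule.span_le]
  rintro _ ⟨i, rfl⟩
  rw [SetLike.mem_coe, Submodule.mem_comap, hT]
  exact Submodule.smul_mem _ _ (Submodule.subset_span ⟨i, rfl⟩)

section InnerProductSpace

variable {ι 𝕜 E : Type*} [Fintype ι] [RCLike 𝕜] [NormedAddCommGroup E] [InnerProductSpace 𝕜 E]

theorem OrthonormalBasis.mul_norm_le_norm_apply (u : OrthonormalBasis ι 𝕜 E) {S : E →ₗ[𝕜] E}
    {γ : ι → 𝕜} (hS : ∀ j, S (u j) = γ j • u j) {δ : ℝ} (hδ : 0 ≤ δ) {w : E}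
    (hw : ∀ j, ‖γ j‖ ≤ δ → ⟪u j, w⟫_𝕜 = 0) : δ * ‖w‖ ≤ ‖S w‖ := by
  have hSw (j : ι) : ⟪u j, S w⟫_𝕜 = γ j * ⟪u j, w⟫_𝕜 := by
    simpa [u.repr_apply_apply] using
      u.toBasis.repr_apply_of_apply_eq_smul (by simpa using hS) w j
  have hsq : (δ * ‖w‖) ^ 2 ≤ ‖S w‖ ^ 2 := by
    rw [mul_pow, ← u.sum_sq_norm_inner_right w, ← u.sum_sq_norm_inner_right (S w),
      Finset.mul_sum]
    refine Finset.sum_le_sum fun j _ => ?_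
    rw [hSw, norm_mul, mul_pow]
    rcases le_or_gt ‖γ j‖ δ with hj | hj
    · simp [hw j hj]
    · gcongr
  exact (pow_le_pow_iff_left₀ (by positivity) (norm_nonneg _) two_ne_zero).1 hsq

namespace LinearMap.IsSymmetric

variable {T : Module.End 𝕜 E} (hT : T.IsSymmetric) {K : Submodule 𝕜 E}
  [K.HasOrthogonalProjection] (hK : K ∈ T.invtSubmodule)
include hT hK

theorem starProjection_apply_of_mem_invtSubmodule (x : E) :
    K.starProjection (T x) = T (K.starProjection x) := by
  refine Submodule.eq_starProjection_of_mem_orthogonal (hK (K.starProjection_apply_mem x)) ?_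
  rw [← map_sub]
  exact hT.orthogonalComplement_mem_invtSubmodule hK (K.sub_starProjection_mem_orthogonal x)

theorem norm_apply_starProjection_orthogonal_le (x : E) :
    ‖T (Kᗮ.starProjection x)‖ ≤ ‖T x‖ := by
  rw [← hT.starProjection_apply_of_mem_invtSubmodule (hT.orthogonalComplement_mem_invtSubmodule hK)]
  exact Kᗮ.norm_starProjection_apply_le _

end LinearMap.IsSymmetric

end InnerProductSpace

theorem Matrix.IsHermitian.toEuclideanLin_eigenvectorBasis {𝕜 n : Type*} [RCLike 𝕜] [Fintype n]
    [DecidableEq n] {A : Matrix n n 𝕜} (hA : A.IsHermitian) (j : n) :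
    toEuclideanLin A (hA.eigenvectorBasis j) = (hA.eigenvalues j : 𝕜) • hA.eigenvectorBasis j := by
  rw [toLpLin_apply, hA.mulVec_eigenvectorBasis, RCLike.real_smul_eq_coe_smul (K := 𝕜)]
  rfl

section SortedSpectrum

variable {N : ℕ} {A : Matrix (Fin N) (Fin N) ℂ}

theorem eigVal_add_one (A : Matrix (Fin N) (Fin N) ℂ) (t : Fin N) :
    eigVal A (t + 1) = eigsDesc A t := by
  simp [eigVal]

theorem card_eigsDesc_eq (hA : A.IsHermitian) (μ : ℝ) :
    Fintype.card {t // eigsDesc A t = μ} = Fintype.card {j // hA.eigenvalues j = μ} :=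
  Fintype.card_congr <| (Fin.revPerm.trans (Tuple.sort hA.eigenvalues)).subtypeEquiv fun t => by
    simp [eigsDesc, hA]

theorem le_and_lt_of_eigsDesc_eq_of_gap {n k : ℕ} {ρ δ μ : ℝ}
    (hgap : ∀ i : ℕ, 1 ≤ i → i ≤ N → (i < n + 1 ∨ n + k < i) → δ < |eigVal A i - ρ|)
    (hμ : |μ - ρ| ≤ δ) {t : Fin N} (ht : eigsDesc A t = μ) : n ≤ t ∧ t < n + k := by
  by_contra hout
  have := hgap (t + 1) (by omega) (by omega) (by omega)
  rw [eigVal_add_one, ht] at this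
  linarith

theorem card_eigsDesc_eq_le_of_gap {n k : ℕ} {ρ δ μ : ℝ}
    (hgap : ∀ i : ℕ, 1 ≤ i → i ≤ N → (i < n + 1 ∨ n + k < i) → δ < |eigVal A i - ρ|)
    (hμ : |μ - ρ| ≤ δ) :
    Fintype.card {t // eigsDesc A t = μ}
      ≤ Fintype.card {i : Fin k // eigVal A (n + i + 1) = μ} := by
  refine Fintype.card_le_of_injective
    (fun t => ⟨⟨t.1 - n, by have := le_and_lt_of_eigsDesc_eq_of_gap hgap hμ t.2; omega⟩, ?_⟩) ?_
  · have := le_and_lt_of_eigsDesc_eq_of_gap hgap hμ t.2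
    calc eigVal A (n + (t.1 - n : ℕ) + 1) = eigVal A (t.1 + 1) := by congr 1; omega
      _ = μ := by rw [eigVal_add_one, t.2]
  · intro s t hst
    have hs := le_and_lt_of_eigsDesc_eq_of_gap hgap hμ s.2
    have ht := le_and_lt_of_eigsDesc_eq_of_gap hgap hμ t.2
    have := congrArg (fun i => (i.1 : ℕ)) hst
    simp only at this
    ext; omega

theorem eigenspace_le_span_of_gap (hA : A.IsHermitian) {n k : ℕ} {ρ δ μ : ℝ}
    (hgap : ∀ i : ℕ, 1 ≤ i → i ≤ N → (i < n + 1 ∨ n + k < i) → δ < |eigVal A i - ρ|)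
    {v : Fin k → EuclideanSpace ℂ (Fin N)} (hv : LinearIndependent ℂ v)
    (hveig : ∀ i : Fin k, toEuclideanLin A (v i) = (eigVal A (n + i.val + 1) : ℂ) • v i)
    (hμ : |μ - ρ| ≤ δ) :
    Module.End.eigenspace (toEuclideanLin A) (μ : ℂ) ≤ Submodule.span ℂ (Set.range v) := by
  set W := Submodule.span ℂ
    (Set.range fun i : {i : Fin k // eigVal A (n + i + 1) = μ} => v i)
  have hWK : W ≤ Module.End.eigenspace (toEuclideanLin A) (μ : ℂ) := by
    rw [Submodule.span_le]
    rintro _ ⟨i, rfl⟩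
    rw [SetLike.mem_coe, Module.End.mem_eigenspace_iff, hveig, i.2]
  have hdim : Module.finrank ℂ (Module.End.eigenspace (toEuclideanLin A) (μ : ℂ))
      ≤ Module.finrank ℂ W :=
    calc _ ≤ Fintype.card {j // (hA.eigenvalues j : ℂ) = μ} :=
          hA.eigenvectorBasis.toBasis.finrank_eigenspace_le_card
            (by simpa using hA.toEuclideanLin_eigenvectorBasis) _
      _ = Fintype.card {j // hA.eigenvalues j = μ} :=
          Fintype.card_congr (Equiv.subtypeEquivRight fun _ => Complex.ofReal_inj)
      _ = Fintype.card {t // eigsDesc A t = μ} := (card_eigsDesc_eq hA μ).symm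
      _ ≤ Fintype.card {i : Fin k // eigVal A (n + i + 1) = μ} :=
          card_eigsDesc_eq_le_of_gap hgap hμ
      _ = Module.finrank ℂ W := (finrank_span_eq_card (hv.comp _ Subtype.val_injective)).symm
  calc _ = W := (Submodule.eq_of_le_of_finrank_le hWK hdim).symm
    _ ≤ Submodule.span ℂ (Set.range v) := Submodule.span_mono (Set.range_comp_subset_range _ _)

theorem norm_toEuclideanLin_apply_le (A : Matrix (Fin N) (Fin N) ℂ) (x : EuclideanSpace ℂ (Fin N)) :
    ‖toEuclideanLin A x‖ ≤ opNorm A * ‖x‖ :=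
  (toEuclideanCLM (𝕜 := ℂ) A).le_opNorm x

theorem norm_toEuclideanLin_sub_smul_le {M M' : Matrix (Fin N) (Fin N) ℂ} {μ ρ : ℝ}
    {ξ : EuclideanSpace ℂ (Fin N)} (hξ : toEuclideanLin M ξ = (μ : ℂ) • ξ) :
    ‖toEuclideanLin M' ξ - (ρ : ℂ) • ξ‖ ≤ (opNorm (M - M') + |μ - ρ|) * ‖ξ‖ := by
  have hsplit : toEuclideanLin M' ξ - (ρ : ℂ) • ξ
      = ((μ - ρ : ℝ) : ℂ) • ξ - toEuclideanLin (M - M') ξ := by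
    rw [map_sub, LinearMap.sub_apply, hξ]
    push_cast
    module
  calc _ ≤ ‖((μ - ρ : ℝ) : ℂ) • ξ‖ + ‖toEuclideanLin (M - M') ξ‖ := by
        rw [hsplit]; exact norm_sub_le _ _
    _ ≤ |μ - ρ| * ‖ξ‖ + opNorm (M - M') * ‖ξ‖ := by
        rw [norm_smul, Complex.norm_real, Real.norm_eq_abs]
        gcongr
        exact norm_toEuclideanLin_apply_le _ _
    _ = _ := by ring

end SortedSpectrum

theorem statement5_general {N : ℕ} (M M' : Matrix (Fin N) (Fin N) ℂ)
    (hM' : M'.IsHermitian)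
    (f : ℝ) (hf : opNorm (M - M') ≤ f)
    (ρ : ℝ) (δ₀ : ℝ) (hδ₀ : 0 < δ₀)
    (n k : ℕ)
    (hgap : ∀ i : ℕ, 1 ≤ i → i ≤ N → (i < n + 1 ∨ n + k < i) → δ₀ / 2 < |eigVal M' i - ρ|)
    (v : Fin k → EuclideanSpace ℂ (Fin N)) (hv : Orthonormal ℂ v)
    (hveig : ∀ i : Fin k,
      Matrix.toEuclideanLin M' (v i) = (eigVal M' (n + i.val + 1) : ℂ) • v i)
    (l : ℕ)
    (ξ : EuclideanSpace ℂ (Fin N)) (hξ : ‖ξ‖ = 1)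
    (hξeig : Matrix.toEuclideanLin M ξ = (eigVal M (n + l) : ℂ) • ξ) :
    ‖(Submodule.orthogonalProjectionOnto (Submodule.span ℂ (Set.range v))ᗮ ξ : EuclideanSpace ℂ (Fin N))‖
      ≤ (2 / δ₀) * (f + |eigVal M (n + l) - ρ|) := by
  set E := Submodule.span ℂ (Set.range v)
  set S : Module.End ℂ (EuclideanSpace ℂ (Fin N)) := toEuclideanLin M' - (ρ : ℂ) • 1
  set u := hM'.eigenvectorBasis
  set w := Eᗮ.starProjection ξ
  have hS : S.IsSymmetric := (isSymmetric_toEuclideanLin_iff.2 hM').sub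
    (LinearMap.IsSymmetric.id.smul (Complex.conj_ofReal ρ))
  have hSu (j : Fin N) : S (u j) = ((hM'.eigenvalues j - ρ : ℝ) : ℂ) • u j := by
    simp [S, u, hM'.toEuclideanLin_eigenvectorBasis, sub_smul]
  have hSv (i : Fin k) : S (v i) = ((eigVal M' (n + i.val + 1) : ℂ) - ρ) • v i := by
    simp [S, hveig, sub_smul]
  have hwu (j : Fin N) (hj : ‖((hM'.eigenvalues j - ρ : ℝ) : ℂ)‖ ≤ δ₀ / 2) : ⟪u j, w⟫_ℂ = 0 := by
    rw [Complex.norm_real, Real.norm_eq_abs] at hj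
    refine Submodule.inner_right_of_mem_orthogonal ?_ (Eᗮ.starProjection_apply_mem ξ)
    exact eigenspace_le_span_of_gap hM' hgap hv.linearIndependent hveig hj
      (Module.End.mem_eigenspace_iff.2 (hM'.toEuclideanLin_eigenvectorBasis j))
  have hlow : δ₀ / 2 * ‖w‖ ≤ ‖S w‖ := u.mul_norm_le_norm_apply hSu (by positivity) hwu
  have hproj : ‖S w‖ ≤ ‖S ξ‖ :=
    hS.norm_apply_starProjection_orthogonal_le (Module.End.span_range_mem_invtSubmodule hSv) ξ
  have hup : ‖S ξ‖ ≤ f + |eigVal M (n + l) - ρ| :=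
    calc ‖S ξ‖ ≤ (opNorm (M - M') + |eigVal M (n + l) - ρ|) * ‖ξ‖ :=
          norm_toEuclideanLin_sub_smul_le hξeig
      _ ≤ f + |eigVal M (n + l) - ρ| := by rw [hξ, mul_one]; gcongr
  calc ‖w‖ = 2 / δ₀ * (δ₀ / 2 * ‖w‖) := by field_simp
    _ ≤ 2 / δ₀ * (f + |eigVal M (n + l) - ρ|) := by gcongr; exact hlow.trans (hproj.trans hup)

/-- Lemma `evProj`: if the eigenvalues of `M'` outside the window
`λ_{n+1},…,λ_{n+k}` stay at distance `> δ₀/2` from `ρ`, and `E` is spanned by an orthonormal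
family of eigenvectors of `M'` for `λ_{n+1}(M'),…,λ_{n+k}(M')`, then any unit eigenvector `ξ`
of `M` for `λ_{n+l}(M)` satisfies
`‖P_{E^⊥} ξ‖ ≤ (2/δ₀)(f + |λ_{n+l}(M) − ρ|)`, provided `‖M − M'‖ ≤ f`. -/
theorem statement5 {N : ℕ} (M M' : Matrix (Fin N) (Fin N) ℂ)
    (hM : M.IsHermitian) (hM' : M'.IsHermitian)
    (f : ℝ) (hf : opNorm (M - M') ≤ f)
    (ρ : ℝ) (δ₀ : ℝ) (hδ₀ : 0 < δ₀)
    (n k : ℕ) (hk : 1 ≤ k) (hnk : n + k ≤ N)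
    (hgap : ∀ i : ℕ, 1 ≤ i → i ≤ N → (i < n + 1 ∨ n + k < i) → δ₀ / 2 < |eigVal M' i - ρ|)
    (v : Fin k → EuclideanSpace ℂ (Fin N)) (hv : Orthonormal ℂ v)
    (hveig : ∀ i : Fin k,
      Matrix.toEuclideanLin M' (v i) = (eigVal M' (n + i.val + 1) : ℂ) • v i)
    (l : ℕ) (hl1 : 1 ≤ l) (hlk : l ≤ k)
    (ξ : EuclideanSpace ℂ (Fin N)) (hξ : ‖ξ‖ = 1)
    (hξeig : Matrix.toEuclideanLin M ξ = (eigVal M (n + l) : ℂ) • ξ) :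
    ‖(Submodule.orthogonalProjectionOnto (Submodule.span ℂ (Set.range v))ᗮ ξ : EuclideanSpace ℂ (Fin N))‖
      ≤ (2 / δ₀) * (f + |eigVal M (n + l) - ρ|) :=
  statement5_general M M' hM' f hf ρ δ₀ hδ₀ n k hgap v hv hveig l ξ hξ hξeig
end

section
/- Let A, X, X′ be N×N Hermitian matrices, let h: ℝ → ℝ be Lipschitz with Lipschitz constant ‖h‖_Lip, and let f: ℝ → ℝ be any function. Then |Tr[h(X + A) f(A)] − Tr[h(X′ + A) f(A)]| ≤ ‖f(A)‖₂ · ‖h‖_Lip · ‖X − X′‖₂. In particular, if f(A) is an orthogonal projection of rank k, the map X ↦ Tr[h(X + A) f(A)] on Hermitian matrices is Lipschitz with constant √k · ‖h‖_Lip with respect to the Hilbert–Schmidt norm. -/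
open Matrix

/-- Functional calculus on Hermitian matrices: apply `g : ℝ → ℝ` to the eigenvalues in a
spectral decomposition (junk value `0` on non-Hermitian matrices). -/
noncomputable def matFun {N : ℕ} (A : Matrix (Fin N) (Fin N) ℂ) (g : ℝ → ℝ) :
    Matrix (Fin N) (Fin N) ℂ :=
  if h : A.IsHermitian then h.cfc g else 0

/-- Hilbert–Schmidt norm `‖M‖₂ = (Tr M M^*)^{1/2}`. -/
noncomputable def hsNorm {m n : ℕ} (M : Matrix (Fin m) (Fin n) ℂ) : ℝ :=
  Real.sqrt ((Matrix.trace (M * Mᴴ)).re)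

/-! Diagonalize `Y = U Λ U*` and `Y' = V M V*`. Conjugating by the unitaries, which preserves the
Hilbert–Schmidt norm, turns `g(Y) - g(Y')` into the matrix with entries `(g λᵢ - g μⱼ) Wᵢⱼ`, where
`W = U* V`, and `Y - Y'` into the one with entries `(λᵢ - μⱼ) Wᵢⱼ`. So a Lipschitz bound on `g`
holds entrywise, hence in Hilbert–Schmidt norm, and Cauchy–Schwarz for `(M, P) ↦ Tr (M P)` gives
the estimate. An orthogonal projection has eigenvalues in `{0, 1}`, so its squared Hilbert–Schmidt
norm is its trace, i.e. its rank. -/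

open scoped Matrix.Norms.Frobenius

namespace Matrix

variable {𝕜 : Type*} [RCLike 𝕜] {m n : Type*} [Fintype m] [Fintype n]

lemma frobenius_norm_sq (M : Matrix m n 𝕜) : ‖M‖ ^ 2 = ∑ i, ∑ j, ‖M i j‖ ^ 2 := by
  change ‖WithLp.toLp 2 fun i => WithLp.toLp 2 fun j => M i j‖ ^ 2 = _
  simp [PiLp.norm_sq_eq_of_L2]

lemma frobenius_norm_sq_eq_re_trace (M : Matrix m n 𝕜) :
    ‖M‖ ^ 2 = RCLike.re (trace (M * Mᴴ)) := by
  simp only [frobenius_norm_sq, trace, diag, mul_apply, conjTranspose_apply, RCLike.star_def,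
    RCLike.mul_conj, map_sum]
  norm_cast

lemma norm_trace_mul_le (M : Matrix m n 𝕜) (P : Matrix n m 𝕜) :
    ‖trace (M * P)‖ ≤ ‖M‖ * ‖P‖ := by
  have hsq (Q : Matrix m n 𝕜) : ‖Q‖ = √(∑ p : m × n, ‖Q p.1 p.2‖ ^ 2) := by
    simp only [Fintype.sum_prod_type, ← frobenius_norm_sq, Real.sqrt_sq (norm_nonneg _)]
  calc ‖trace (M * P)‖ = ‖∑ p : m × n, M p.1 p.2 * Pᵀ p.1 p.2‖ := by
        simp [trace, mul_apply, Fintype.sum_prod_type]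
    _ ≤ ∑ p : m × n, ‖M p.1 p.2‖ * ‖Pᵀ p.1 p.2‖ := by
        refine (norm_sum_le _ _).trans_eq ?_
        simp only [norm_mul]
    _ ≤ ‖M‖ * ‖Pᵀ‖ := by
        rw [hsq, hsq]
        exact Real.sum_mul_le_sqrt_mul_sqrt _ _ _
    _ = ‖M‖ * ‖P‖ := by rw [frobenius_norm_transpose]

variable [DecidableEq m] [DecidableEq n]

lemma frobenius_norm_unitary_mul_mul {U : Matrix m m 𝕜} {V : Matrix n n 𝕜}
    (hU : U ∈ unitaryGroup m 𝕜) (hV : V ∈ unitaryGroup n 𝕜) (M : Matrix m n 𝕜) :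
    ‖U * M * V‖ = ‖M‖ := by
  have hU' : Uᴴ * U = 1 := mem_unitaryGroup_iff'.mp hU
  have hV' : V * Vᴴ = 1 := mem_unitaryGroup_iff.mp hV
  have hMV : U * M * V * (U * M * V)ᴴ = U * (M * Mᴴ) * Uᴴ := by
    simp only [conjTranspose_mul, Matrix.mul_assoc]
    rw [← Matrix.mul_assoc V, hV', Matrix.one_mul]
  refine (sq_eq_sq₀ (norm_nonneg _) (norm_nonneg _)).mp ?_
  rw [frobenius_norm_sq_eq_re_trace, frobenius_norm_sq_eq_re_trace, hMV, trace_mul_cycle,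
    ← Matrix.mul_assoc, hU', Matrix.one_mul]

lemma frobenius_norm_sq_diagonal_mul_sub_mul_diagonal (a : m → ℝ) (b : n → ℝ)
    (W : Matrix m n 𝕜) :
    -- without the ascriptions `*` elaborates as multiplication of `CStarMatrix`
    ‖diagonal (RCLike.ofReal ∘ a : m → 𝕜) * W
        - W * diagonal (RCLike.ofReal ∘ b : n → 𝕜)‖ ^ 2
      = ∑ i, ∑ j, (a i - b j) ^ 2 * ‖W i j‖ ^ 2 := by
  rw [frobenius_norm_sq]
  refine Finset.sum_congr rfl fun i _ => Finset.sum_congr rfl fun j _ => ?_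
  rw [sub_apply, diagonal_mul, mul_diagonal, mul_comm (W i j), ← sub_mul, norm_mul, mul_pow,
    Function.comp_apply, Function.comp_apply, ← RCLike.ofReal_sub, RCLike.norm_ofReal, sq_abs]

lemma frobenius_norm_sq_conj_diagonal_sub_conj_diagonal (U V : unitaryGroup n 𝕜)
    (a b : n → ℝ) :
    ‖Unitary.conjStarAlgAut 𝕜 _ U (diagonal (RCLike.ofReal ∘ a))
        - Unitary.conjStarAlgAut 𝕜 _ V (diagonal (RCLike.ofReal ∘ b))‖ ^ 2
      = ∑ i, ∑ j, (a i - b j) ^ 2 * ‖(star (U : Matrix n n 𝕜) * V) i j‖ ^ 2 := by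
  rw [← frobenius_norm_sq_diagonal_mul_sub_mul_diagonal,
    ← frobenius_norm_unitary_mul_mul (Unitary.star_mem U.2) V.2]
  simp only [Unitary.conjStarAlgAut_apply, Matrix.mul_sub, Matrix.sub_mul, ← Matrix.mul_assoc,
    Unitary.coe_star_mul_self, Matrix.one_mul]
  simp only [Matrix.mul_assoc, Unitary.coe_star_mul_self, Matrix.mul_one]

end Matrix

lemma LipschitzWith.sq_sub_le {L : NNReal} {g : ℝ → ℝ} (hg : LipschitzWith L g) (x y : ℝ) :
    (g x - g y) ^ 2 ≤ L ^ 2 * (x - y) ^ 2 := by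
  have h := hg.dist_le_mul x y
  rw [Real.dist_eq, Real.dist_eq] at h
  rw [← sq_abs, ← sq_abs (x - y), ← mul_pow]
  exact pow_le_pow_left₀ (abs_nonneg _) h 2

namespace Matrix.IsHermitian

variable {𝕜 : Type*} [RCLike 𝕜] {n : Type*} [Fintype n] [DecidableEq n]

lemma frobenius_norm_cfc_sub_cfc_le {A B : Matrix n n 𝕜} (hA : A.IsHermitian)
    (hB : B.IsHermitian) {L : NNReal} {g : ℝ → ℝ} (hg : LipschitzWith L g) :
    ‖hA.cfc g - hB.cfc g‖ ≤ L * ‖A - B‖ := by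
  set W := star (hA.eigenvectorUnitary : Matrix n n 𝕜) * hB.eigenvectorUnitary
  have hAB : ‖A - B‖ ^ 2
      = ∑ i, ∑ j, (hA.eigenvalues i - hB.eigenvalues j) ^ 2 * ‖W i j‖ ^ 2 := by
    rw [← frobenius_norm_sq_conj_diagonal_sub_conj_diagonal, ← hA.spectral_theorem,
      ← hB.spectral_theorem]
  refine le_of_pow_le_pow_left₀ two_ne_zero (by positivity) ?_
  rw [IsHermitian.cfc, IsHermitian.cfc, frobenius_norm_sq_conj_diagonal_sub_conj_diagonal,
    mul_pow, hAB]
  simp only [Finset.mul_sum, ← mul_assoc]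
  gcongr with i _ j _
  exact hg.sq_sub_le _ _

lemma frobenius_norm_sq_eq_rank {P : Matrix n n 𝕜} (hP : P.IsHermitian)
    (hPP : IsIdempotentElem P) : ‖P‖ ^ 2 = P.rank := by
  have h01 (i : n) : hP.eigenvalues i = 0 ∨ hP.eigenvalues i = 1 := by
    simpa using hPP.spectrum_subset ℝ (hP.eigenvalues_mem_spectrum_real i)
  rw [frobenius_norm_sq_eq_re_trace, hP.eq, hPP.eq, hP.trace_eq_sum_eigenvalues,
    hP.rank_eq_card_non_zero_eigs, Fintype.card_subtype, Finset.natCast_card_filter, map_sum]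
  refine Finset.sum_congr rfl fun i _ => ?_
  rcases h01 i with h | h <;> simp [h]

end Matrix.IsHermitian

lemma hsNorm_eq_frobenius_norm {m n : ℕ} (M : Matrix (Fin m) (Fin n) ℂ) :
    hsNorm M = ‖M‖ := by
  rw [hsNorm, ← RCLike.re_to_complex, ← Matrix.frobenius_norm_sq_eq_re_trace,
    Real.sqrt_sq (norm_nonneg _)]

lemma matFun_of_isHermitian {N : ℕ} {A : Matrix (Fin N) (Fin N) ℂ} (hA : A.IsHermitian)
    (g : ℝ → ℝ) : matFun A g = hA.cfc g :=
  dif_pos hA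

/-- Lemma `Lipschitz`, additive case:
`|Tr[h(X+A)f(A)] − Tr[h(X'+A)f(A)]| ≤ ‖f(A)‖₂ ‖h‖_Lip ‖X−X'‖₂`; in particular if `f(A)` is an
orthogonal projection of rank `k`, the map `X ↦ Tr[h(X+A)f(A)]` is `√k‖h‖_Lip`-Lipschitz for
the Hilbert–Schmidt norm. -/
theorem statement6 {N : ℕ} (A X X' : Matrix (Fin N) (Fin N) ℂ)
    (hA : A.IsHermitian) (hX : X.IsHermitian) (hX' : X'.IsHermitian)
    (L : NNReal) (h : ℝ → ℝ) (hLip : LipschitzWith L h) (f : ℝ → ℝ) :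
    ‖Matrix.trace (matFun (X + A) h * matFun A f)
        - Matrix.trace (matFun (X' + A) h * matFun A f)‖
      ≤ hsNorm (matFun A f) * L * hsNorm (X - X') ∧
    (∀ k : ℕ, (matFun A f).IsHermitian → matFun A f * matFun A f = matFun A f →
      (matFun A f).rank = k →
      ‖Matrix.trace (matFun (X + A) h * matFun A f)
          - Matrix.trace (matFun (X' + A) h * matFun A f)‖
        ≤ Real.sqrt k * L * hsNorm (X - X')) := by
  have hXA := hX.add hA
  have hX'A := hX'.add hA
  have hbound : ‖Matrix.trace (matFun (X + A) h * matFun A f)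
        - Matrix.trace (matFun (X' + A) h * matFun A f)‖
      ≤ hsNorm (matFun A f) * L * hsNorm (X - X') := by
    rw [← Matrix.trace_sub, ← Matrix.sub_mul, matFun_of_isHermitian hXA,
      matFun_of_isHermitian hX'A, hsNorm_eq_frobenius_norm, hsNorm_eq_frobenius_norm]
    calc _ ≤ ‖hXA.cfc h - hX'A.cfc h‖ * ‖matFun A f‖ := Matrix.norm_trace_mul_le _ _
      _ ≤ L * ‖X + A - (X' + A)‖ * ‖matFun A f‖ := by
          gcongr
          exact hXA.frobenius_norm_cfc_sub_cfc_le hX'A hLip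
      _ = ‖matFun A f‖ * L * ‖X - X'‖ := by rw [add_sub_add_right_eq_sub]; ring
  refine ⟨hbound, fun k hP hPP hk => ?_⟩
  rwa [hsNorm_eq_frobenius_norm, ← Real.sqrt_sq (norm_nonneg (matFun A f)),
    hP.frobenius_norm_sq_eq_rank hPP, hk] at hbound
end

section
/- Let H be an N×N positive semidefinite Hermitian matrix, let v ∈ ℂ^N, and let z ∈ ℂ∖ℝ. Then | z ( 1 − v^* (zI_N − H)^{-1} v ) | ≥ |Im z|. More precisely, | Im[ z ( 1 − v^* (zI_N − H)^{-1} v ) ] | = |Im z| · ( 1 + |z|^{-2} v^* (I − z^{-1}H)^{-1} H (I − z̄^{-1}H)^{-1} v ) ≥ |Im z|. -/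
/-!
Put `A = (1 - z⁻¹H)⁻¹ = z (zI - H)⁻¹`, so that `z (1 - v^*(zI - H)⁻¹v) = z - v^*Av`. Since `H` is
Hermitian, `Aᴴ = (1 - z̄⁻¹H)⁻¹`, and the second resolvent identity gives
`A - Aᴴ = (z⁻¹ - z̄⁻¹) A H Aᴴ`. Taking the quadratic form at `v`,
`Im (v^*Av) = Im (z⁻¹) · v^*AHAᴴv = -Im z |z|⁻² v^*AHAᴴv`, and `v^*AHAᴴv ≥ 0` because `H ≥ 0`.
-/

open Matrix
open scoped ComplexOrder

namespace Matrix

variable {n : Type*} [Fintype n]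

theorem IsHermitian.isUnit_det_smul_one_sub [DecidableEq n] {𝕜 : Type*} [RCLike 𝕜]
    {H : Matrix n n 𝕜} (hH : H.IsHermitian) {z : 𝕜} (hz : RCLike.im z ≠ 0) :
    IsUnit (z • 1 - H).det := by
  have hdet : (z • 1 - H).det = H.charpoly.eval z := by
    rw [eval_charpoly, scalar_apply, smul_one_eq_diagonal]
  rw [hdet, hH.charpoly_eq, Polynomial.eval_prod, isUnit_iff_ne_zero, Finset.prod_ne_zero_iff]
  intro i _ h
  apply hz
  simpa [sub_eq_zero] using congrArg RCLike.im h

theorem inv_one_sub_inv_smul [DecidableEq n] {K : Type*} [Field K] {H : Matrix n n K} {z : K}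
    (hz : z ≠ 0) (hdet : IsUnit (z • 1 - H).det) : (1 - z⁻¹ • H)⁻¹ = z • (z • 1 - H)⁻¹ := by
  have hscale : 1 - z⁻¹ • H = Units.mk0 z⁻¹ (inv_ne_zero hz) • (z • 1 - H) := by
    rw [Units.smul_def, Units.val_mk0, smul_sub, smul_smul, inv_mul_cancel₀ hz, one_smul]
  rw [hscale, inv_smul' _ _ hdet, Units.smul_def, Units.val_inv_eq_inv_val, Units.val_mk0,
    inv_inv]

section StarRing

variable [DecidableEq n] {α : Type*} [CommRing α] [StarRing α] {H : Matrix n n α}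

theorem IsHermitian.conjTranspose_inv_one_sub_smul (hH : H.IsHermitian) (c : α) :
    ((1 - c • H)⁻¹)ᴴ = (1 - star c • H)⁻¹ := by
  rw [conjTranspose_nonsing_inv, conjTranspose_sub, conjTranspose_one, conjTranspose_smul, hH.eq]

theorem IsHermitian.inv_one_sub_smul_sub_conjTranspose (hH : H.IsHermitian) (c : α) :
    (1 - c • H)⁻¹ - ((1 - c • H)⁻¹)ᴴ = (c - star c) • ((1 - c • H)⁻¹ * H * ((1 - c • H)⁻¹)ᴴ) := by
  have hdiff : (1 - c • H)ᴴ - (1 - c • H) = (c - star c) • H := by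
    rw [conjTranspose_sub, conjTranspose_one, conjTranspose_smul, hH.eq, sub_smul]
    abel
  rw [conjTranspose_nonsing_inv, inv_sub_inv (isUnit_conjTranspose _).symm, hdiff,
    Matrix.mul_smul, Matrix.smul_mul]

end StarRing

theorem im_star_dotProduct_mulVec_of_sub_conjTranspose {𝕜 : Type*} [RCLike 𝕜]
    {A B : Matrix n n 𝕜} {c : 𝕜} (hB : B.IsHermitian) (h : A - Aᴴ = (c - star c) • B)
    (v : n → 𝕜) : RCLike.im (star v ⬝ᵥ A *ᵥ v) = RCLike.im c * RCLike.re (star v ⬝ᵥ B *ᵥ v) := by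
  have hstar : star (star v ⬝ᵥ A *ᵥ v) = star v ⬝ᵥ Aᴴ *ᵥ v := by
    rw [star_dotProduct, star_star, star_mulVec, ← dotProduct_mulVec]
  have hsub : star v ⬝ᵥ A *ᵥ v - star (star v ⬝ᵥ A *ᵥ v) = (c - star c) * (star v ⬝ᵥ B *ᵥ v) := by
    rw [hstar, ← dotProduct_sub, ← sub_mulVec, h, smul_mulVec, dotProduct_smul, smul_eq_mul]
  have hreal : RCLike.im (star v ⬝ᵥ B *ᵥ v) = 0 := hB.im_star_dotProduct_mulVec_self v
  have him := congrArg RCLike.im hsub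
  simp only [RCLike.mul_im, map_sub, RCLike.star_def, RCLike.conj_im, RCLike.conj_re, hreal]
    at him
  linarith

end Matrix

/-- Lemma `maj`: for a positive semidefinite `H`, a vector `v` and a nonreal `z`,
`|Im[z(1 − v^*(zI−H)^{-1}v)]| = |Im z|·(1 + |z|^{-2} v^*(I−z^{-1}H)^{-1}H(I−z̄^{-1}H)^{-1}v)
  ≥ |Im z|`, and in particular `|z(1 − v^*(zI−H)^{-1}v)| ≥ |Im z|`. -/
theorem statement9 {N : ℕ} (H : Matrix (Fin N) (Fin N) ℂ) (hH : H.PosSemidef)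
    (v : Fin N → ℂ) (z : ℂ) (hz : z.im ≠ 0) :
    |(z * (1 - star v ⬝ᵥ ((z • (1 : Matrix (Fin N) (Fin N) ℂ) - H)⁻¹).mulVec v)).im|
        = |z.im| * (1 + (‖z‖ ^ 2)⁻¹ *
            (star v ⬝ᵥ (((1 : Matrix (Fin N) (Fin N) ℂ) - z⁻¹ • H)⁻¹ * H *
              ((1 : Matrix (Fin N) (Fin N) ℂ) - (starRingEnd ℂ z)⁻¹ • H)⁻¹).mulVec v).re) ∧
    |z.im| ≤
      |(z * (1 - star v ⬝ᵥ ((z • (1 : Matrix (Fin N) (Fin N) ℂ) - H)⁻¹).mulVec v)).im| ∧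
    |z.im| ≤
      ‖z * (1 - star v ⬝ᵥ ((z • (1 : Matrix (Fin N) (Fin N) ℂ) - H)⁻¹).mulVec v)‖ := by
  have hz0 : z ≠ 0 := fun h => hz (by simp [h])
  set A := (1 - z⁻¹ • H)⁻¹ with hA
  have hAH : Aᴴ = (1 - (starRingEnd ℂ z)⁻¹ • H)⁻¹ := by
    rw [hA, hH.isHermitian.conjTranspose_inv_one_sub_smul, star_inv₀, Complex.star_def]
  have hzs : z * (star v ⬝ᵥ (z • 1 - H)⁻¹ *ᵥ v) = star v ⬝ᵥ A *ᵥ v := by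
    rw [hA, inv_one_sub_inv_smul hz0 (hH.isHermitian.isUnit_det_smul_one_sub hz), smul_mulVec,
      dotProduct_smul, smul_eq_mul]
  set w := star v ⬝ᵥ (A * H * Aᴴ) *ᵥ v
  have hw : 0 ≤ w.re := (hH.mul_mul_conjTranspose_same A).re_dotProduct_nonneg v
  have him : (star v ⬝ᵥ A *ᵥ v).im = (z⁻¹).im * w.re :=
    im_star_dotProduct_mulVec_of_sub_conjTranspose (hH.mul_mul_conjTranspose_same A).isHermitian
      (hH.isHermitian.inv_one_sub_smul_sub_conjTranspose _) v
  have hfactor : 1 ≤ 1 + (‖z‖ ^ 2)⁻¹ * w.re := le_add_of_nonneg_right (by positivity)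
  have hIm : (z * (1 - star v ⬝ᵥ (z • 1 - H)⁻¹ *ᵥ v)).im = z.im * (1 + (‖z‖ ^ 2)⁻¹ * w.re) := by
    rw [mul_sub, mul_one, hzs, Complex.sub_im, him, Complex.inv_im, Complex.normSq_eq_norm_sq]
    ring
  have habs : |(z * (1 - star v ⬝ᵥ (z • 1 - H)⁻¹ *ᵥ v)).im|
      = |z.im| * (1 + (‖z‖ ^ 2)⁻¹ * w.re) := by
    rw [hIm, abs_mul, abs_of_pos (one_pos.trans_le hfactor)]
  have hbound := habs ▸ le_mul_of_one_le_right (abs_nonneg z.im) hfactor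
  exact ⟨hAH ▸ habs, hbound, hbound.trans (Complex.abs_im_le_norm _)⟩
end

section
/- Let f: ℝ → ℝ be Lipschitz with constant C_L. Then for all N×N Hermitian matrices A and B, ‖f(B) − f(A)‖₂ ≤ C_L ‖B − A‖₂, where f(A) and f(B) are defined by functional calculus; that is, the extension of f to N×N Hermitian matrices is C_L-Lipschitz with respect to the Hilbert–Schmidt norm ‖M‖₂ = (Tr M M^*)^{1/2}. -/
open Matrix Complex

variable {N : ℕ}


lemma statement10aux_L2 (V U : Matrix (Fin N) (Fin N) ℂ) (Da Db : Matrix (Fin N) (Fin N) ℂ) :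
    trace ((V * Db * Vᴴ) * (U * Da * Uᴴ))
      = trace (Db * (Vᴴ * U) * Da * (Vᴴ * U)ᴴ) := by
  rw [show (V * Db * Vᴴ) * (U * Da * Uᴴ) = V * (Db * (Vᴴ * (U * (Da * Uᴴ)))) by
    simp only [mul_assoc], trace_mul_comm]
  congr 1
  simp only [conjTranspose_mul, conjTranspose_conjTranspose, mul_assoc]

lemma statement10aux_L1 (W : Matrix (Fin N) (Fin N) ℂ) (a b : Fin N → ℝ) :
    trace (diagonal (fun i => (b i : ℂ)) * W * diagonal (fun i => (a i : ℂ)) * Wᴴ)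
      = ∑ i, ∑ j, ((b i : ℂ) * a j * Complex.normSq (W i j)) := by
  simp [trace, mul_apply, diagonal, Finset.mul_sum, conjTranspose_apply, mul_comm, mul_assoc,
    mul_left_comm, ← Complex.normSq_eq_conj_mul_self, ← mul_conj]

lemma statement10aux_Lrow (W : Matrix (Fin N) (Fin N) ℂ) (h : W * Wᴴ = 1) (i : Fin N) :
    ∑ j, Complex.normSq (W i j) = 1 := by
  have := congrFun (congrFun h i) i
  simp only [mul_apply, conjTranspose_apply, Complex.star_def, Complex.mul_conj,
    one_apply_eq] at this
  exact_mod_cast this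

lemma statement10aux_Lcol (W : Matrix (Fin N) (Fin N) ℂ) (h : Wᴴ * W = 1) (j : Fin N) :
    ∑ i, Complex.normSq (W i j) = 1 := by
  have := congrFun (congrFun h j) j
  simp only [mul_apply, conjTranspose_apply, Complex.star_def, ← Complex.normSq_eq_conj_mul_self,
    one_apply_eq] at this
  exact_mod_cast this

lemma statement10aux_Lherm (V : Matrix (Fin N) (Fin N) ℂ) (b : Fin N → ℝ) :
    (V * diagonal (fun i => (b i : ℂ)) * Vᴴ)ᴴ = V * diagonal (fun i => (b i : ℂ)) * Vᴴ := by
  simp only [conjTranspose_mul, conjTranspose_conjTranspose, diagonal_conjTranspose, mul_assoc]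
  congr 2
  funext i
  simp [Pi.star_def]

lemma statement10aux_key (V U : Matrix (Fin N) (Fin N) ℂ)
    (hV1 : V * Vᴴ = 1) (hV2 : Vᴴ * V = 1) (hU1 : U * Uᴴ = 1) (hU2 : Uᴴ * U = 1)
    (a b : Fin N → ℝ) :
    (trace ((V * diagonal (fun i => (b i : ℂ)) * Vᴴ - U * diagonal (fun i => (a i : ℂ)) * Uᴴ) *
        (V * diagonal (fun i => (b i : ℂ)) * Vᴴ - U * diagonal (fun i => (a i : ℂ)) * Uᴴ)ᴴ)).re
      = ∑ i, ∑ j, Complex.normSq ((Vᴴ * U) i j) * (b i - a j)^2 := by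
  set W := Vᴴ * U with hW
  set Db := diagonal (fun i => (b i : ℂ)) with hDb
  set Da := diagonal (fun i => (a i : ℂ)) with hDa
  have hWW : W * Wᴴ = 1 := by
    rw [hW, conjTranspose_mul, conjTranspose_conjTranspose]
    calc Vᴴ * U * (Uᴴ * V) = Vᴴ * (U * Uᴴ) * V := by simp only [mul_assoc]
    _ = 1 := by rw [hU1, mul_one, hV2]
  have hWW' : Wᴴ * W = 1 := by
    rw [hW, conjTranspose_mul, conjTranspose_conjTranspose]
    calc Uᴴ * V * (Vᴴ * U) = Uᴴ * (V * Vᴴ) * U := by simp only [mul_assoc]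
    _ = 1 := by rw [hV1, mul_one, hU2]
  have hPP : trace ((V * Db * Vᴴ) * (V * Db * Vᴴ)) = ((∑ i, (b i)^2 : ℝ) : ℂ) := by
    rw [statement10aux_L2, hV2]
    simp only [conjTranspose_one, mul_one]
    push_cast
    simp [hDb, trace, mul_apply, diagonal, sq]
  have hQQ : trace ((U * Da * Uᴴ) * (U * Da * Uᴴ)) = ((∑ i, (a i)^2 : ℝ) : ℂ) := by
    rw [statement10aux_L2, hU2]
    simp only [conjTranspose_one, mul_one]
    push_cast
    simp [hDa, trace, mul_apply, diagonal, sq]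
  have hPQ : trace ((V * Db * Vᴴ) * (U * Da * Uᴴ))
      = ((∑ i, ∑ j, b i * a j * Complex.normSq (W i j) : ℝ) : ℂ) := by
    rw [hDb, hDa, statement10aux_L2, ← hW, statement10aux_L1]; push_cast; rfl
  have hQP : trace ((U * Da * Uᴴ) * (V * Db * Vᴴ))
      = ((∑ i, ∑ j, b i * a j * Complex.normSq (W i j) : ℝ) : ℂ) := by
    rw [trace_mul_comm]; exact hPQ
  have e1 : ∑ i, ∑ j, Complex.normSq (W i j) * (b i)^2 = ∑ i, (b i)^2 :=
    Finset.sum_congr rfl fun i _ => by rw [← Finset.sum_mul, statement10aux_Lrow W hWW i, one_mul]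
  have e2 : ∑ i, ∑ j, Complex.normSq (W i j) * (a j)^2 = ∑ j, (a j)^2 := by
    rw [Finset.sum_comm]
    exact Finset.sum_congr rfl fun j _ => by rw [← Finset.sum_mul, statement10aux_Lcol W hWW' j, one_mul]
  have hrhs : ∑ i, ∑ j, Complex.normSq (W i j) * (b i - a j)^2
      = (∑ i, (b i)^2) + (∑ j, (a j)^2)
        - 2 * ∑ i, ∑ j, b i * a j * Complex.normSq (W i j) := by
    have expand : ∑ i, ∑ j, Complex.normSq (W i j) * (b i - a j)^2
        = ∑ i, ∑ j, (Complex.normSq (W i j) * (b i)^2 + Complex.normSq (W i j) * (a j)^2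
            - 2 * (b i * a j * Complex.normSq (W i j))) :=
      Finset.sum_congr rfl fun i _ => Finset.sum_congr rfl fun j _ => by ring
    rw [expand]
    simp only [Finset.sum_add_distrib, Finset.sum_sub_distrib, ← Finset.mul_sum, e1, e2]
  rw [conjTranspose_sub, statement10aux_Lherm, statement10aux_Lherm]
  rw [show ∀ P Q : Matrix (Fin N) (Fin N) ℂ, (P - Q) * (P - Q) = P * P - P * Q - (Q * P - Q * Q)
    from fun P Q => by noncomm_ring]
  rw [trace_sub, trace_sub, trace_sub, hPP, hQQ, hPQ, hQP, hrhs]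
  simp only [Complex.sub_re, Complex.ofReal_re]
  ring


/-- Lemma `extlipschitz`: a `C_L`-Lipschitz function `f : ℝ → ℝ` extends to a
`C_L`-Lipschitz map on `N×N` Hermitian matrices for the Hilbert–Schmidt norm. -/
theorem statement10 {N : ℕ} (C_L : NNReal) (f : ℝ → ℝ) (hf : LipschitzWith C_L f)
    (A B : Matrix (Fin N) (Fin N) ℂ) (hA : A.IsHermitian) (hB : B.IsHermitian) :
    hsNorm (matFun B f - matFun A f) ≤ C_L * hsNorm (B - A) := by
  set U : Matrix (Fin N) (Fin N) ℂ := (hA.eigenvectorUnitary : Matrix (Fin N) (Fin N) ℂ) with hU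
  set V : Matrix (Fin N) (Fin N) ℂ := (hB.eigenvectorUnitary : Matrix (Fin N) (Fin N) ℂ) with hV
  have hU1 : U * Uᴴ = 1 := by
    rw [← star_eq_conjTranspose]; exact Unitary.mul_star_self_of_mem (SetLike.coe_mem _)
  have hU2 : Uᴴ * U = 1 := by
    rw [← star_eq_conjTranspose]; exact Unitary.star_mul_self_of_mem (SetLike.coe_mem _)
  have hV1 : V * Vᴴ = 1 := by
    rw [← star_eq_conjTranspose]; exact Unitary.mul_star_self_of_mem (SetLike.coe_mem _)
  have hV2 : Vᴴ * V = 1 := by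
    rw [← star_eq_conjTranspose]; exact Unitary.star_mul_self_of_mem (SetLike.coe_mem _)
  set lam := hA.eigenvalues with hlam
  set mu := hB.eigenvalues with hmu
  have hmfA : matFun A f = U * diagonal (fun i => ((f (lam i) : ℝ) : ℂ)) * Uᴴ := by
    rw [matFun, dif_pos hA]; rfl
  have hmfB : matFun B f = V * diagonal (fun i => ((f (mu i) : ℝ) : ℂ)) * Vᴴ := by
    rw [matFun, dif_pos hB]; rfl
  have hAsp : A = U * diagonal (fun i => ((lam i : ℝ) : ℂ)) * Uᴴ := by
    conv_lhs => rw [hA.spectral_theorem]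
    rfl
  have hBsp : B = V * diagonal (fun i => ((mu i : ℝ) : ℂ)) * Vᴴ := by
    conv_lhs => rw [hB.spectral_theorem]
    rfl
  have h1 : hsNorm (matFun B f - matFun A f)
      = Real.sqrt (∑ i, ∑ j, Complex.normSq ((Vᴴ * U) i j) * (f (mu i) - f (lam j))^2) := by
    rw [hsNorm, hmfA, hmfB, statement10aux_key V U hV1 hV2 hU1 hU2]
  have h2 : hsNorm (B - A)
      = Real.sqrt (∑ i, ∑ j, Complex.normSq ((Vᴴ * U) i j) * (mu i - lam j)^2) := by
    rw [hsNorm]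
    conv_lhs => rw [hAsp, hBsp]
    rw [statement10aux_key V U hV1 hV2 hU1 hU2]
  rw [h1, h2]
  have hbound : ∑ i, ∑ j, Complex.normSq ((Vᴴ * U) i j) * (f (mu i) - f (lam j))^2
      ≤ (C_L : ℝ)^2 * ∑ i, ∑ j, Complex.normSq ((Vᴴ * U) i j) * (mu i - lam j)^2 := by
    rw [Finset.mul_sum]
    refine Finset.sum_le_sum fun i _ => ?_
    rw [Finset.mul_sum]
    refine Finset.sum_le_sum fun j _ => ?_
    have hfl : |f (mu i) - f (lam j)| ≤ (C_L : ℝ) * |mu i - lam j| := by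
      have := hf.dist_le_mul (mu i) (lam j)
      rwa [Real.dist_eq, Real.dist_eq] at this
    have hsq : (f (mu i) - f (lam j))^2 ≤ (C_L : ℝ)^2 * (mu i - lam j)^2 := by
      calc (f (mu i) - f (lam j))^2 = |f (mu i) - f (lam j)|^2 := (_root_.sq_abs _).symm
        _ ≤ ((C_L : ℝ) * |mu i - lam j|)^2 := pow_le_pow_left₀ (abs_nonneg _) hfl 2
        _ = (C_L : ℝ)^2 * (mu i - lam j)^2 := by rw [mul_pow, _root_.sq_abs]
    calc Complex.normSq ((Vᴴ * U) i j) * (f (mu i) - f (lam j))^2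
        ≤ Complex.normSq ((Vᴴ * U) i j) * ((C_L : ℝ)^2 * (mu i - lam j)^2) :=
          mul_le_mul_of_nonneg_left hsq (Complex.normSq_nonneg _)
      _ = (C_L : ℝ)^2 * (Complex.normSq ((Vᴴ * U) i j) * (mu i - lam j)^2) := by ring
  calc Real.sqrt (∑ i, ∑ j, Complex.normSq ((Vᴴ * U) i j) * (f (mu i) - f (lam j))^2)
      ≤ Real.sqrt ((C_L : ℝ)^2 * ∑ i, ∑ j, Complex.normSq ((Vᴴ * U) i j) * (mu i - lam j)^2) :=
        Real.sqrt_le_sqrt hbound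
    _ = (C_L : ℝ) * Real.sqrt (∑ i, ∑ j, Complex.normSq ((Vᴴ * U) i j) * (mu i - lam j)^2) := by
        rw [Real.sqrt_mul (sq_nonneg _), Real.sqrt_sq C_L.coe_nonneg]
end

section
/- Let ν be a compactly supported probability measure on ℝ, σ > 0, and H(u) = u + σ² ∫ dν(x)/(u − x) for u ∉ supp ν. If u₁ < u₂ are both outside supp ν and satisfy σ² ∫ dν(x)/(u_i − x)² ≤ 1 for i = 1, 2 (i.e. H′(u_i) ≥ 0), then H(u₁) ≤ H(u₂). -/
open MeasureTheory

def msupport (ν : Measure ℝ) : Set ℝ := {x | ∀ U ∈ nhds x, 0 < ν U}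

lemma msupport_aux (ν : Measure ℝ) :
    ν (msupport ν)ᶜ = 0 ∧ IsClosed (msupport ν) := by
  have h : ∀ x ∈ (msupport ν)ᶜ, ∃ V : Set ℝ, IsOpen V ∧ x ∈ V ∧ ν V = 0 := by
    intro x hx
    simp only [msupport, Set.mem_compl_iff, Set.mem_setOf_eq, not_forall] at hx
    obtain ⟨U, hU, hν⟩ := hx
    refine ⟨interior U, isOpen_interior, mem_interior_iff_mem_nhds.mpr hU, ?_⟩
    have h1 : ν (interior U) ≤ ν U := measure_mono interior_subset
    have h2 : ν U = 0 := le_zero_iff.mp (not_lt.mp hν)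
    exact le_zero_iff.mp (h2 ▸ h1)
  choose! V hVo hVm hVn using h
  have hsub : (msupport ν)ᶜ = ⋃ x : {y : ℝ // y ∈ (msupport ν)ᶜ}, V x := by
    apply Set.Subset.antisymm
    · intro x hx
      exact Set.mem_iUnion.mpr ⟨⟨x, hx⟩, hVm x hx⟩
    · intro y hy
      obtain ⟨⟨x, hx⟩, hyV⟩ := Set.mem_iUnion.mp hy
      simp only [msupport, Set.mem_compl_iff, Set.mem_setOf_eq, not_forall]
      exact ⟨V x, (hVo x hx).mem_nhds hyV, by simp [hVn x hx]⟩
  constructor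
  · obtain ⟨T, hTc, hTU⟩ := TopologicalSpace.isOpen_iUnion_countable
      (fun x : {y : ℝ // y ∈ (msupport ν)ᶜ} => V x) (fun x => hVo x x.2)
    rw [hsub, ← hTU]
    exact (measure_biUnion_null_iff hTc).mpr fun i _ => hVn i i.2
  · rw [← isOpen_compl_iff, hsub]
    exact isOpen_iUnion fun x => hVo x x.2

lemma dist_aux (ν : Measure ℝ) [IsProbabilityMeasure ν] {u : ℝ} (hu : u ∉ msupport ν) :
    ∃ δ > 0, ∀ x ∈ msupport ν, δ ≤ |u - x| := by
  obtain ⟨hnull, hcl⟩ := msupport_aux ν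
  have hne : (msupport ν).Nonempty := by
    by_contra h
    rw [Set.not_nonempty_iff_eq_empty] at h
    have : ν Set.univ = 0 := by rw [← Set.compl_empty, ← h]; exact hnull
    simp [measure_univ] at this
  refine ⟨Metric.infDist u (msupport ν),
    (hcl.notMem_iff_infDist_pos hne).mp hu, fun x hx => ?_⟩
  have := Metric.infDist_le_dist_of_mem (x := u) hx
  rwa [Real.dist_eq] at this

lemma int_aux (ν : Measure ℝ) [IsProbabilityMeasure ν] {f : ℝ → ℝ} (hf : Measurable f)
    {C : ℝ} (hC : ∀ᵐ x ∂ν, |f x| ≤ C) : Integrable f ν :=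
  (integrable_const C).mono' hf.aestronglyMeasurable (by simpa using hC)

/-- Remark `Hcroit`: `H(u) = u + σ²∫dν(x)/(u−x)` is nondecreasing on the set of
points `u` outside `supp ν` where `H'(u) = 1 − σ²∫dν(x)/(u−x)² ≥ 0`. -/
theorem statement11 (ν : Measure ℝ) [IsProbabilityMeasure ν]
    (hcomp : IsCompact (msupport ν)) (σ : ℝ) (hσ : 0 < σ)
    (u₁ u₂ : ℝ) (h12 : u₁ < u₂)
    (h1 : u₁ ∉ msupport ν) (h2 : u₂ ∉ msupport ν)
    (hd1 : σ ^ 2 * ∫ x, ((u₁ - x)⁻¹) ^ 2 ∂ν ≤ 1)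
    (hd2 : σ ^ 2 * ∫ x, ((u₂ - x)⁻¹) ^ 2 ∂ν ≤ 1) :
    u₁ + σ ^ 2 * ∫ x, (u₁ - x)⁻¹ ∂ν ≤ u₂ + σ ^ 2 * ∫ x, (u₂ - x)⁻¹ ∂ν := by
  obtain ⟨hnull, hcl⟩ := msupport_aux ν
  have hae : ∀ᵐ x ∂ν, x ∈ msupport ν := by
    rw [ae_iff]; exact hnull
  obtain ⟨δ₁, hδ₁, hb₁⟩ := dist_aux ν h1
  obtain ⟨δ₂, hδ₂, hb₂⟩ := dist_aux ν h2
  set a : ℝ → ℝ := fun x => (u₁ - x)⁻¹ with ha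
  set b : ℝ → ℝ := fun x => (u₂ - x)⁻¹ with hb
  have hma : Measurable a := (measurable_const.sub measurable_id).inv
  have hmb : Measurable b := (measurable_const.sub measurable_id).inv
  have habd : ∀ᵐ x ∂ν, |a x| ≤ δ₁⁻¹ := by
    filter_upwards [hae] with x hx
    rw [ha, abs_inv]
    exact inv_anti₀ hδ₁ (hb₁ x hx)
  have hbbd : ∀ᵐ x ∂ν, |b x| ≤ δ₂⁻¹ := by
    filter_upwards [hae] with x hx
    rw [hb, abs_inv]
    exact inv_anti₀ hδ₂ (hb₂ x hx)
  have hIa : Integrable a ν := int_aux ν hma habd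
  have hIb : Integrable b ν := int_aux ν hmb hbbd
  have hIa2 : Integrable (fun x => a x ^ 2) ν := by
    refine int_aux ν (hma.pow_const 2) (C := δ₁⁻¹ * δ₁⁻¹) ?_
    filter_upwards [habd] with x hx
    calc |a x ^ 2| = |a x| * |a x| := by rw [sq, abs_mul]
    _ ≤ δ₁⁻¹ * δ₁⁻¹ := mul_le_mul hx hx (abs_nonneg _) (by positivity)
  have hIb2 : Integrable (fun x => b x ^ 2) ν := by
    refine int_aux ν (hmb.pow_const 2) (C := δ₂⁻¹ * δ₂⁻¹) ?_
    filter_upwards [hbbd] with x hx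
    calc |b x ^ 2| = |b x| * |b x| := by rw [sq, abs_mul]
    _ ≤ δ₂⁻¹ * δ₂⁻¹ := mul_le_mul hx hx (abs_nonneg _) (by positivity)
  have hIab : Integrable (fun x => a x * b x) ν := by
    refine int_aux ν (hma.mul hmb) (C := δ₁⁻¹ * δ₂⁻¹) ?_
    filter_upwards [habd, hbbd] with x hx hy
    rw [abs_mul]
    exact mul_le_mul hx hy (abs_nonneg _) (by positivity)
  -- key identity
  have hnz : ∀ᵐ x ∂ν, u₁ - x ≠ 0 ∧ u₂ - x ≠ 0 := by
    filter_upwards [hae] with x hx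
    constructor
    · intro h; apply absurd (hb₁ x hx); rw [h]; simp [not_le, hδ₁]
    · intro h; apply absurd (hb₂ x hx); rw [h]; simp [not_le, hδ₂]
  have hident : (∫ x, b x ∂ν) - (∫ x, a x ∂ν) = (u₁ - u₂) * ∫ x, a x * b x ∂ν := by
    rw [← integral_sub hIb hIa, ← integral_const_mul]
    refine integral_congr_ae ?_
    filter_upwards [hnz] with x ⟨hx1, hx2⟩
    simp only [ha, hb]
    rw [inv_sub_inv hx2 hx1, div_eq_mul_inv, mul_inv]
    ring
  -- AM-GM bound
  have hAM : (∫ x, a x * b x ∂ν) ≤ ((∫ x, a x ^ 2 ∂ν) + (∫ x, b x ^ 2 ∂ν)) / 2 := by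
    have : (∫ x, a x * b x ∂ν) ≤ ∫ x, (a x ^ 2 + b x ^ 2) / 2 ∂ν := by
      refine integral_mono hIab ((hIa2.add hIb2).div_const 2) fun x => ?_
      nlinarith [sq_nonneg (a x - b x)]
    rwa [integral_div, integral_add hIa2 hIb2] at this
  have hkey : σ ^ 2 * ∫ x, a x * b x ∂ν ≤ 1 := by
    have hσ2 : (0:ℝ) ≤ σ ^ 2 := sq_nonneg σ
    nlinarith [mul_le_mul_of_nonneg_left hAM hσ2]
  have hfin : σ ^ 2 * ((∫ x, b x ∂ν) - (∫ x, a x ∂ν)) =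
      (u₁ - u₂) * (σ ^ 2 * ∫ x, a x * b x ∂ν) := by rw [hident]; ring
  nlinarith [mul_le_mul_of_nonneg_left hkey (le_of_lt (sub_pos.mpr h12))]
end

section
/- Let ν be a compactly supported probability measure on [0, ∞) and c > 0, and set Z(1/u) = u + c ∫ t·u/(u − t) dν(t) for u ≠ 0 outside supp ν. If a ≤ b are both nonzero, both outside supp ν, and satisfy c ∫ t²/(a − t)² dν(t) ≤ 1 and c ∫ t²/(b − t)² dν(t) ≤ 1, then Z(1/a) ≤ Z(1/b). Moreover, if a ≠ b and both strict inequalities c ∫ t²/(a − t)² dν(t) < 1 and c ∫ t²/(b − t)² dν(t) < 1 hold, then Z(1/a) ≠ Z(1/b). -/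
/-!
Writing `g_u(t) = t / (u - t)`, one has `t·b/(b-t) - t·a/(a-t) = (a - b)·g_a(t)·g_b(t)`, hence
`Z(1/b) - Z(1/a) = (b - a)·(1 - c∫ g_a g_b dν)`. By AM-GM,
`c∫ g_a g_b dν ≤ (c∫ g_a² dν + c∫ g_b² dν)/2`, which is `≤ 1` (resp. `< 1`) under the hypotheses.
-/

open MeasureTheory

section Support

variable {ν : Measure ℝ}

lemma measure_compl_msupport (ν : Measure ℝ) : ν (msupport ν)ᶜ = 0 := by
  refine measure_null_of_locally_null _ fun x hx => ?_
  simp only [msupport, Set.mem_compl_iff, Set.mem_ofPred_eq, not_forall, not_lt,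
    nonpos_iff_eq_zero] at hx
  obtain ⟨U, hU, hU0⟩ := hx
  exact ⟨U, nhdsWithin_le_nhds hU, hU0⟩

lemma ae_mem_msupport (ν : Measure ℝ) : ∀ᵐ t ∂ν, t ∈ msupport ν :=
  measure_compl_msupport ν

lemma ae_ne_of_notMem_msupport {u : ℝ} (hu : u ∉ msupport ν) : ∀ᵐ t ∂ν, t ≠ u :=
  (ae_mem_msupport ν).mono fun _ ht h => hu (h ▸ ht)

lemma integrable_of_continuousOn_msupport [IsFiniteMeasure ν] (hcomp : IsCompact (msupport ν))
    {f : ℝ → ℝ} (hf : Measurable f) (hcont : ContinuousOn f (msupport ν)) : Integrable f ν := by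
  obtain ⟨C, hC⟩ := hcomp.exists_bound_of_continuousOn hcont
  refine ⟨hf.aestronglyMeasurable, HasFiniteIntegral.of_bounded (C := C) ?_⟩
  filter_upwards [ae_mem_msupport ν] with t ht using hC t ht

lemma continuousOn_div_sub_of_notMem_msupport {u : ℝ} (hu : u ∉ msupport ν) :
    ContinuousOn (fun t => t / (u - t)) (msupport ν) :=
  continuousOn_id.div (continuousOn_const.sub continuousOn_id) fun _ ht h =>
    hu (sub_eq_zero.mp h ▸ ht)

end Support

lemma integral_mul_le_half_integral_sq_add {α : Type*} [MeasurableSpace α] {μ : Measure α}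
    {f g : α → ℝ} (hfg : Integrable (fun x => f x * g x) μ) (hf : Integrable (fun x => f x ^ 2) μ)
    (hg : Integrable (fun x => g x ^ 2) μ) :
    ∫ x, f x * g x ∂μ ≤ ((∫ x, f x ^ 2 ∂μ) + ∫ x, g x ^ 2 ∂μ) / 2 := by
  rw [← integral_add hf hg, ← integral_div]
  exact integral_mono hfg ((hf.add hg).div_const 2) fun x =>
    by nlinarith [sq_nonneg (f x - g x)]

section Transform

variable {ν : Measure ℝ} [IsFiniteMeasure ν] (hcomp : IsCompact (msupport ν)) {a b : ℝ}
  (ha : a ∉ msupport ν) (hb : b ∉ msupport ν)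

include hcomp ha hb in
lemma integrable_div_sub_mul_div_sub :
    Integrable (fun t => t / (a - t) * (t / (b - t))) ν :=
  integrable_of_continuousOn_msupport hcomp (by fun_prop)
    ((continuousOn_div_sub_of_notMem_msupport ha).mul (continuousOn_div_sub_of_notMem_msupport hb))

include hcomp ha in
lemma integrable_div_sub_sq : Integrable (fun t => (t / (a - t)) ^ 2) ν :=
  (integrable_div_sub_mul_div_sub hcomp ha ha).congr (ae_of_all _ fun _ => (sq _).symm)

include hcomp ha in
lemma integrable_mul_div_sub : Integrable (fun t => t * a / (a - t)) ν :=
  integrable_of_continuousOn_msupport hcomp (by fun_prop)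
    (((continuousOn_div_sub_of_notMem_msupport ha).mul continuousOn_const).congr fun _ _ =>
      (div_mul_eq_mul_div _ _ _).symm)

include hcomp ha hb in
lemma integral_mul_div_sub_sub_integral_mul_div_sub :
    ∫ t, t * b / (b - t) ∂ν - ∫ t, t * a / (a - t) ∂ν
      = (a - b) * ∫ t, t / (a - t) * (t / (b - t)) ∂ν := by
  rw [← integral_sub (integrable_mul_div_sub hcomp hb) (integrable_mul_div_sub hcomp ha),
    ← integral_const_mul]
  refine integral_congr_ae ?_
  filter_upwards [ae_ne_of_notMem_msupport ha, ae_ne_of_notMem_msupport hb] with t hta htb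
  have : a - t ≠ 0 := sub_ne_zero.mpr hta.symm
  have : b - t ≠ 0 := sub_ne_zero.mpr htb.symm
  field_simp
  ring

end Transform

theorem statement12_general (ν : Measure ℝ) [IsProbabilityMeasure ν]
    (hcomp : IsCompact (msupport ν))
    (c : ℝ) (hc : 0 < c)
    (a b : ℝ)
    (ha : a ∉ msupport ν) (hb : b ∉ msupport ν) :
    (a ≤ b → c * ∫ t, (t / (a - t)) ^ 2 ∂ν ≤ 1 → c * ∫ t, (t / (b - t)) ^ 2 ∂ν ≤ 1 →
      a + c * ∫ t, t * a / (a - t) ∂ν ≤ b + c * ∫ t, t * b / (b - t) ∂ν) ∧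
    (a ≠ b → c * ∫ t, (t / (a - t)) ^ 2 ∂ν < 1 → c * ∫ t, (t / (b - t)) ^ 2 ∂ν < 1 →
      a + c * ∫ t, t * a / (a - t) ∂ν ≠ b + c * ∫ t, t * b / (b - t) ∂ν) := by
  set I := ∫ t, t / (a - t) * (t / (b - t)) ∂ν
  have hZ : (b + c * ∫ t, t * b / (b - t) ∂ν) - (a + c * ∫ t, t * a / (a - t) ∂ν)
      = (b - a) * (1 - c * I) := by
    linear_combination c * integral_mul_div_sub_sub_integral_mul_div_sub hcomp ha hb
  have hI : c * I ≤ c * ((∫ t, (t / (a - t)) ^ 2 ∂ν) + ∫ t, (t / (b - t)) ^ 2 ∂ν) / 2 := by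
    rw [mul_div_assoc]
    exact mul_le_mul_of_nonneg_left (integral_mul_le_half_integral_sq_add
      (integrable_div_sub_mul_div_sub hcomp ha hb) (integrable_div_sub_sq hcomp ha)
      (integrable_div_sub_sq hcomp hb)) hc.le
  refine ⟨fun hab hA hB => ?_, fun hab hA hB heq => ?_⟩
  · have : 0 ≤ (b - a) * (1 - c * I) := mul_nonneg (by linarith) (by linarith)
    linarith
  · have : (b - a) * (1 - c * I) ≠ 0 := mul_ne_zero (sub_ne_zero.mpr hab.symm) (by linarith)
    exact this (by rw [← hZ, heq, sub_self])

/-- Remarks `croissance globaleS` and (5.12): with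
`Z(1/u) = u + c∫ t·u/(u−t) dν(t)`, if `a ≤ b` are nonzero, outside `supp ν` and satisfy
`c∫t²/(·−t)² dν ≤ 1`, then `Z(1/a) ≤ Z(1/b)`; and if `a ≠ b` with the strict inequalities,
then `Z(1/a) ≠ Z(1/b)`. -/
theorem statement12 (ν : Measure ℝ) [IsProbabilityMeasure ν]
    (hcomp : IsCompact (msupport ν)) (hpos : msupport ν ⊆ Set.Ici (0 : ℝ))
    (c : ℝ) (hc : 0 < c)
    (a b : ℝ) (ha0 : a ≠ 0) (hb0 : b ≠ 0)
    (ha : a ∉ msupport ν) (hb : b ∉ msupport ν) :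
    (a ≤ b → c * ∫ t, (t / (a - t)) ^ 2 ∂ν ≤ 1 → c * ∫ t, (t / (b - t)) ^ 2 ∂ν ≤ 1 →
      a + c * ∫ t, t * a / (a - t) ∂ν ≤ b + c * ∫ t, t * b / (b - t) ∂ν) ∧
    (a ≠ b → c * ∫ t, (t / (a - t)) ^ 2 ∂ν < 1 → c * ∫ t, (t / (b - t)) ^ 2 ∂ν < 1 →
      a + c * ∫ t, t * a / (a - t) ∂ν ≠ b + c * ∫ t, t * b / (b - t) ∂ν) :=
  statement12_general ν hcomp c hc a b ha hb
end

section
/- Let ρ ∈ ℝ and δ > 0, and let φ be analytic on the set { z ∈ ℂ : |Re z − ρ| < 2δ } ∖ {ρ}, satisfying φ(z̄) = conjugate(φ(z)) on this set. Let h: ℝ → ℝ be a C^∞ function with 0 ≤ h ≤ 1, supported in [ρ − δ, ρ + δ], and identically equal to 1 on [ρ − δ/2, ρ + δ/2]. Then lim_{y → 0⁺} (1/π) ∫_ℝ h(t) · Im φ(t + iy) dt = − Res(φ, ρ), where Res(φ, ρ) denotes the residue of φ at its isolated singularity ρ, i.e. the coefficient of 1/(z − ρ) in the Laurent expansion of φ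 at ρ (equivalently (1/2πi) times the integral of φ over a small positively oriented circle around ρ). In particular, if φ extends analytically to ρ, the limit is 0. -/
open Filter MeasureTheory Topology Set intervalIntegral

open Complex in
/-- A primitive for a holomorphic function on the product domain `{re < X} ×ℂ (Y₁, Y₂)`. -/
lemma stmt19_primitive {X Y₁ Y₂ x₀ y₀ : ℝ} (hx₀ : x₀ < X) (hy₀ : y₀ ∈ Set.Ioo Y₁ Y₂)
    {ψ : ℂ → ℂ} (hψ : ∀ w : ℂ, w.re < X → w.im ∈ Set.Ioo Y₁ Y₂ → DifferentiableAt ℂ ψ w) :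
    ∃ H : ℂ → ℂ, ∀ w : ℂ, w.re < X → w.im ∈ Set.Ioo Y₁ Y₂ → HasDerivAt H (ψ w) w := by
  -- integrability of `ψ` along horizontal and vertical segments in the domain
  have hmemh : ∀ (t y : ℝ), t < X → y ∈ Set.Ioo Y₁ Y₂ →
      ((t : ℂ) + (y : ℂ) * I).re < X ∧ ((t : ℂ) + (y : ℂ) * I).im ∈ Set.Ioo Y₁ Y₂ := by
    intro t y ht hy; constructor <;> simp [ht, hy.1, hy.2]
  have hch : ∀ (t y : ℝ), t < X → y ∈ Set.Ioo Y₁ Y₂ →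
      ContinuousAt (fun t : ℝ => ψ ((t : ℂ) + (y : ℂ) * I)) t := by
    intro t y ht hy
    have := (hψ _ (hmemh t y ht hy).1 (hmemh t y ht hy).2).continuousAt
    have hin : Continuous (fun t : ℝ => (t : ℂ) + (y : ℂ) * I) := by fun_prop
    have h2 : ContinuousAt (ψ ∘ fun t : ℝ => (t : ℂ) + (y : ℂ) * I) t :=
      ContinuousAt.comp (by exact this) hin.continuousAt
    exact h2
  have hcv : ∀ (x s : ℝ), x < X → s ∈ Set.Ioo Y₁ Y₂ →
      ContinuousAt (fun s : ℝ => ψ ((x : ℂ) + (s : ℂ) * I)) s := by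
    intro x s hx hs
    have := (hψ _ (hmemh x s hx hs).1 (hmemh x s hx hs).2).continuousAt
    have hin : Continuous (fun s : ℝ => (x : ℂ) + (s : ℂ) * I) := by fun_prop
    have h2 : ContinuousAt (ψ ∘ fun s : ℝ => (x : ℂ) + (s : ℂ) * I) s :=
      ContinuousAt.comp (by exact this) hin.continuousAt
    exact h2
  have hinth : ∀ (y p q : ℝ), y ∈ Set.Ioo Y₁ Y₂ → p < X → q < X →
      IntervalIntegrable (fun t : ℝ => ψ ((t : ℂ) + (y : ℂ) * I)) volume p q := by
    intro y p q hy hp hq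
    refine ContinuousOn.intervalIntegrable (fun t ht => ?_)
    have htX : t < X := lt_of_le_of_lt ht.2 (max_lt hp hq)
    exact (hch t y htX hy).continuousWithinAt
  have hintv : ∀ (x p q : ℝ), x < X → p ∈ Set.Ioo Y₁ Y₂ → q ∈ Set.Ioo Y₁ Y₂ →
      IntervalIntegrable (fun s : ℝ => ψ ((x : ℂ) + (s : ℂ) * I)) volume p q := by
    intro x p q hx hp hq
    refine ContinuousOn.intervalIntegrable (fun s hs => ?_)
    have hsY : s ∈ Set.Ioo Y₁ Y₂ := by
      constructor
      · exact lt_of_lt_of_le (lt_min hp.1 hq.1) hs.1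
      · exact lt_of_le_of_lt hs.2 (max_lt hp.2 hq.2)
    exact (hcv x s hx hsY).continuousWithinAt
  set H : ℂ → ℂ := fun z =>
    (∫ t in x₀..z.re, ψ ((t : ℂ) + (y₀ : ℂ) * I)) +
      I * ∫ s in y₀..z.im, ψ ((z.re : ℂ) + (s : ℂ) * I) with hHdef
  refine ⟨H, ?_⟩
  intro w hwX hwY
  -- difference formula
  have hdiff : ∀ z' : ℂ, z'.re < X → z'.im ∈ Set.Ioo Y₁ Y₂ →
      H z' - H w = (∫ t in w.re..z'.re, ψ ((t : ℂ) + (z'.im : ℂ) * I)) +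
        I * ∫ s in w.im..z'.im, ψ ((w.re : ℂ) + (s : ℂ) * I) := by
    intro z' hz'X hz'Y
    have hrect := Complex.integral_boundary_rect_eq_zero_of_differentiableOn ψ
      ((w.re : ℂ) + (y₀ : ℂ) * I) ((z'.re : ℂ) + (z'.im : ℂ) * I) ?hd
    case hd =>
      intro u hu
      rw [Complex.mem_reProdIm] at hu
      refine (hψ u ?_ ?_).differentiableWithinAt
      · simp only [Complex.add_re, Complex.ofReal_re, Complex.mul_I_re, Complex.ofReal_im,
          neg_zero, add_zero] at hu
        exact lt_of_le_of_lt hu.1.2 (max_lt hwX hz'X)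
      · simp only [Complex.add_im, Complex.ofReal_im, Complex.mul_I_im, Complex.ofReal_re,
          zero_add] at hu
        constructor
        · exact lt_of_lt_of_le (lt_min hy₀.1 hz'Y.1) hu.2.1
        · exact lt_of_le_of_lt hu.2.2 (max_lt hy₀.2 hz'Y.2)
    simp only [Complex.add_re, Complex.ofReal_re, Complex.mul_I_re, Complex.ofReal_im, neg_zero,
      add_zero, Complex.add_im, Complex.mul_I_im, zero_add, smul_eq_mul] at hrect
    have e1 : (∫ t in x₀..z'.re, ψ ((t : ℂ) + (y₀ : ℂ) * I)) -
        (∫ t in x₀..w.re, ψ ((t : ℂ) + (y₀ : ℂ) * I)) =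
        ∫ t in w.re..z'.re, ψ ((t : ℂ) + (y₀ : ℂ) * I) :=
      intervalIntegral.integral_interval_sub_left (hinth y₀ x₀ z'.re hy₀ hx₀ hz'X)
        (hinth y₀ x₀ w.re hy₀ hx₀ hwX)
    have e2 : (∫ s in y₀..z'.im, ψ ((w.re : ℂ) + (s : ℂ) * I)) -
        (∫ s in y₀..w.im, ψ ((w.re : ℂ) + (s : ℂ) * I)) =
        ∫ s in w.im..z'.im, ψ ((w.re : ℂ) + (s : ℂ) * I) :=
      intervalIntegral.integral_interval_sub_left (hintv w.re y₀ z'.im hwX hy₀ hz'Y)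
        (hintv w.re y₀ w.im hwX hy₀ hwY)
    simp only [hHdef]
    linear_combination e1 + hrect + Complex.I * e2
  -- now the derivative estimate
  rw [hasDerivAt_iff_isLittleO, Asymptotics.isLittleO_iff]
  intro c hc
  have hV : {u : ℂ | u.re < X ∧ u.im ∈ Set.Ioo Y₁ Y₂} ∈ 𝓝 w := by
    refine IsOpen.mem_nhds ?_ ⟨hwX, hwY⟩
    exact (isOpen_lt Complex.continuous_re continuous_const).inter
      (isOpen_Ioo.preimage Complex.continuous_im)
  obtain ⟨r₁, hr₁, hsub⟩ := Metric.mem_nhds_iff.mp hV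
  obtain ⟨d, hd0, hdim⟩ := Metric.continuousAt_iff.mp (hψ w hwX hwY).continuousAt (c / 2)
    (by positivity)
  set r := min r₁ d with hrdef
  have hr0 : 0 < r := lt_min hr₁ hd0
  filter_upwards [Metric.ball_mem_nhds w (show (0 : ℝ) < r / 2 by positivity)] with z' hz'
  have hdist : dist z' w < r / 2 := by simpa [Metric.mem_ball] using hz'
  have hz'V : z'.re < X ∧ z'.im ∈ Set.Ioo Y₁ Y₂ := by
    refine hsub ?_
    have : dist z' w < r₁ := lt_of_lt_of_le (lt_of_lt_of_le hdist (by linarith [min_le_left r₁ d]))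
      (le_refl _)
    simpa [Metric.mem_ball] using this
  have hrere : |z'.re - w.re| ≤ dist z' w := by
    have := Complex.abs_re_le_norm (z' - w)
    simpa [Complex.dist_eq, Complex.sub_re] using this
  have himim : |z'.im - w.im| ≤ dist z' w := by
    have := Complex.abs_im_le_norm (z' - w)
    simpa [Complex.dist_eq, Complex.sub_im] using this
  have hnear : ∀ u : ℂ, |u.re - w.re| ≤ dist z' w → |u.im - w.im| ≤ dist z' w →
      ‖ψ u - ψ w‖ ≤ c / 2 := by
    intro u h1 h2
    have hd : dist u w < d := by
      have : dist u w ≤ |u.re - w.re| + |u.im - w.im| := by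
        have := Complex.norm_le_abs_re_add_abs_im (u - w)
        simpa [Complex.dist_eq, Complex.sub_re, Complex.sub_im] using this
      have hrd : r ≤ d := min_le_right _ _
      calc dist u w ≤ |u.re - w.re| + |u.im - w.im| := this
        _ ≤ dist z' w + dist z' w := add_le_add h1 h2
        _ < r / 2 + r / 2 := by linarith
        _ = r := by ring
        _ ≤ d := hrd
    have := hdim hd
    rw [dist_eq_norm] at this
    exact this.le
  have hAint : IntervalIntegrable (fun t : ℝ => ψ ((t : ℂ) + (z'.im : ℂ) * I)) volume w.re z'.re :=
    hinth z'.im w.re z'.re hz'V.2 hwX hz'V.1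
  have hBint : IntervalIntegrable (fun s : ℝ => ψ ((w.re : ℂ) + (s : ℂ) * I)) volume w.im z'.im :=
    hintv w.re w.im z'.im hwX hwY hz'V.2
  have key : H z' - H w - (z' - w) • ψ w =
      (∫ t in w.re..z'.re, (ψ ((t : ℂ) + (z'.im : ℂ) * I) - ψ w)) +
        I * ∫ s in w.im..z'.im, (ψ ((w.re : ℂ) + (s : ℂ) * I) - ψ w) := by
    rw [hdiff z' hz'V.1 hz'V.2, intervalIntegral.integral_sub hAint intervalIntegrable_const,
      intervalIntegral.integral_sub hBint intervalIntegrable_const,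
      intervalIntegral.integral_const, intervalIntegral.integral_const]
    have hzw : z' - w = ((z'.re - w.re : ℝ) : ℂ) + ((z'.im - w.im : ℝ) : ℂ) * I := by
      simp [Complex.ext_iff]
    rw [smul_eq_mul, hzw]
    simp only [Complex.real_smul]
    push_cast
    ring
  have hb1 : ‖∫ t in w.re..z'.re, (ψ ((t : ℂ) + (z'.im : ℂ) * I) - ψ w)‖ ≤
      c / 2 * |z'.re - w.re| := by
    refine intervalIntegral.norm_integral_le_of_norm_le_const ?_
    intro t ht
    have ht' : |t - w.re| ≤ |z'.re - w.re| := by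
      rcases Set.mem_uIoc.mp ht with h | h
      · rw [_root_.abs_of_nonneg (by linarith [h.1]), _root_.abs_of_nonneg (by linarith [h.1, h.2])]
        linarith [h.2]
      · rw [_root_.abs_of_nonpos (by linarith [h.2]), _root_.abs_of_nonpos (by linarith [h.1, h.2])]
        linarith [h.1]
    refine hnear _ ?_ ?_
    · simpa using le_trans ht' hrere
    · simpa using himim
  have hb2 : ‖∫ s in w.im..z'.im, (ψ ((w.re : ℂ) + (s : ℂ) * I) - ψ w)‖ ≤
      c / 2 * |z'.im - w.im| := by
    refine intervalIntegral.norm_integral_le_of_norm_le_const ?_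
    intro s hs
    have hs' : |s - w.im| ≤ |z'.im - w.im| := by
      rcases Set.mem_uIoc.mp hs with h | h
      · rw [_root_.abs_of_nonneg (by linarith [h.1]), _root_.abs_of_nonneg (by linarith [h.1, h.2])]
        linarith [h.2]
      · rw [_root_.abs_of_nonpos (by linarith [h.2]), _root_.abs_of_nonpos (by linarith [h.1, h.2])]
        linarith [h.1]
    refine hnear _ ?_ ?_
    · simpa using dist_nonneg
    · simpa using le_trans hs' himim
  have hzw : ‖z' - w‖ = dist z' w := by rw [dist_eq_norm]
  calc ‖H z' - H w - (z' - w) • ψ w‖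
      ≤ ‖∫ t in w.re..z'.re, (ψ ((t : ℂ) + (z'.im : ℂ) * I) - ψ w)‖ +
        ‖I * ∫ s in w.im..z'.im, (ψ ((w.re : ℂ) + (s : ℂ) * I) - ψ w)‖ := by
        rw [key]; exact norm_add_le _ _
    _ ≤ c / 2 * |z'.re - w.re| + c / 2 * |z'.im - w.im| := by
        rw [norm_mul, Complex.norm_I, one_mul]
        exact add_le_add hb1 hb2
    _ ≤ c / 2 * ‖z' - w‖ + c / 2 * ‖z' - w‖ := by
        rw [hzw]
        have h1 : 0 ≤ c / 2 := by positivity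
        exact add_le_add (mul_le_mul_of_nonneg_left hrere h1)
          (mul_le_mul_of_nonneg_left himim h1)
    _ = c * ‖z' - w‖ := by ring


lemma stmt19_up {ρ δ' : ℝ} (hδ' : 0 < δ') {φ : ℂ → ℂ}
    (hφ : ∀ z : ℂ, ‖z - (ρ : ℂ)‖ < δ' → z ≠ (ρ : ℂ) → DifferentiableAt ℂ φ z) :
    ∃ G : ℂ → ℂ, ∀ z : ℂ, ‖z - (ρ : ℂ)‖ < δ' → (z.re ≠ ρ ∨ 0 < z.im) →
      HasDerivAt G (φ z) z := by
  have hpi := Real.pi_pos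
  have hψ : ∀ w : ℂ, w.re < Real.log δ' → w.im ∈ Set.Ioo (-(Real.pi/2)) (3*Real.pi/2) →
      DifferentiableAt ℂ (fun w : ℂ => φ ((ρ : ℂ) + Complex.exp w) * Complex.exp w) w := by
    intro w hw _
    have habs : ‖(ρ : ℂ) + Complex.exp w - (ρ : ℂ)‖ < δ' := by
      rw [add_sub_cancel_left, Complex.norm_exp]
      calc Real.exp w.re < Real.exp (Real.log δ') := Real.exp_lt_exp.mpr hw
        _ = δ' := Real.exp_log hδ'
    have hne : (ρ : ℂ) + Complex.exp w ≠ (ρ : ℂ) := by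
      intro hc
      exact Complex.exp_ne_zero w (by linear_combination hc)
    have h1 : DifferentiableAt ℂ (fun w : ℂ => φ ((ρ : ℂ) + Complex.exp w)) w :=
      DifferentiableAt.comp w (hφ _ habs hne)
        ((differentiableAt_const _).add Complex.differentiableAt_exp)
    exact h1.mul Complex.differentiableAt_exp
  obtain ⟨H, hH⟩ := stmt19_primitive (X := Real.log δ')
    (x₀ := Real.log δ' - 1) (y₀ := Real.pi/2) (by linarith)
    ⟨by linarith, by linarith⟩ hψ
  refine ⟨fun z => H (Complex.log (-Complex.I * (z - (ρ : ℂ))) + (Real.pi/2 : ℝ) * Complex.I),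
    ?_⟩
  intro z hzb hzu
  have hzρ : z ≠ (ρ : ℂ) := by
    rintro rfl
    simp at hzu
  set u : ℂ := -Complex.I * (z - (ρ : ℂ)) with hu
  have hu0 : u ≠ 0 := by
    simp [hu, sub_ne_zero.mpr hzρ, Complex.I_ne_zero]
  have hure : u.re = z.im := by simp [hu]
  have huim : u.im = -(z.re - ρ) := by simp [hu]
  have huslit : u ∈ Complex.slitPlane := by
    rw [Complex.mem_slitPlane_iff]
    rcases hzu with h | h
    · right; rw [huim]; simpa [sub_eq_zero, eq_comm] using h
    · left; rw [hure]; exact h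
  have habsu : ‖u‖ = ‖z - (ρ : ℂ)‖ := by
    simp [hu]
  set w : ℂ := Complex.log u + (Real.pi/2 : ℝ) * Complex.I with hw
  have hwX : w.re < Real.log δ' := by
    rw [hw, Complex.add_re, Complex.log_re]
    have h0 : 0 < ‖u‖ := by
      rw [habsu]
      exact norm_pos_iff.mpr (sub_ne_zero.mpr hzρ)
    have := Real.log_lt_log h0 (by rw [habsu] at *; exact hzb)
    simpa using this
  have hwY : w.im ∈ Set.Ioo (-(Real.pi/2)) (3*Real.pi/2) := by
    have harg1 := Complex.neg_pi_lt_arg u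
    have harg2 : u.arg < Real.pi :=
      lt_of_le_of_ne (Complex.arg_le_pi u) (Complex.mem_slitPlane_iff_arg.mp huslit).1
    constructor <;> · rw [hw]; simp [Complex.log_im]; linarith
  have hexp : Complex.exp w = z - (ρ : ℂ) := by
    rw [hw, Complex.exp_add, Complex.exp_log hu0]
    have hI : Complex.exp ((Real.pi/2 : ℝ) * Complex.I) = Complex.I := by
      rw [Complex.exp_mul_I, ← Complex.ofReal_cos, ← Complex.ofReal_sin]
      simp
    rw [hI, hu]
    ring_nf
    simp [Complex.I_sq]
    ring
  have hL : HasDerivAt (fun z : ℂ =>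
      Complex.log (-Complex.I * (z - (ρ : ℂ))) + (Real.pi/2 : ℝ) * Complex.I)
      ((z - (ρ : ℂ))⁻¹) z := by
    have h1 : HasDerivAt (fun z : ℂ => -Complex.I * (z - (ρ : ℂ))) (-Complex.I) z := by
      simpa using ((hasDerivAt_id z).sub_const ((ρ : ℂ))).const_mul (-Complex.I)
    have h2 := (Complex.hasDerivAt_log huslit).comp z h1
    have h3 : u⁻¹ * -Complex.I = (z - (ρ : ℂ))⁻¹ := by
      rw [hu]
      have : (-Complex.I * (z - (ρ : ℂ)))⁻¹ = (-Complex.I)⁻¹ * (z - (ρ : ℂ))⁻¹ := by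
        rw [mul_inv]
      rw [this]
      have hIinv : (-Complex.I)⁻¹ = Complex.I := by
        rw [inv_neg, Complex.inv_I, neg_neg]
      rw [hIinv]
      ring_nf
      simp [Complex.I_sq]
    have h4 := h2.add_const ((Real.pi/2 : ℝ) * Complex.I)
    simpa [Function.comp, h3] using h4
  have hHd := hH w hwX hwY
  have hfinal := hHd.comp z hL
  have hval : φ ((ρ : ℂ) + Complex.exp w) * Complex.exp w * (z - (ρ : ℂ))⁻¹ = φ z := by
    rw [hexp]
    have : (ρ : ℂ) + (z - (ρ : ℂ)) = z := by ring
    rw [this, mul_assoc, mul_inv_cancel₀ (sub_ne_zero.mpr hzρ), mul_one]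
  rw [hval] at hfinal
  exact hfinal


lemma stmt19_down {ρ δ' : ℝ} (hδ' : 0 < δ') {φ : ℂ → ℂ}
    (hφ : ∀ z : ℂ, ‖z - (ρ : ℂ)‖ < δ' → z ≠ (ρ : ℂ) → DifferentiableAt ℂ φ z) :
    ∃ G : ℂ → ℂ, ∀ z : ℂ, ‖z - (ρ : ℂ)‖ < δ' → (z.re ≠ ρ ∨ z.im < 0) →
      HasDerivAt G (φ z) z := by
  have hpi := Real.pi_pos
  have hψ : ∀ w : ℂ, w.re < Real.log δ' → w.im ∈ Set.Ioo (-(3*Real.pi/2)) (Real.pi/2) →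
      DifferentiableAt ℂ (fun w : ℂ => φ ((ρ : ℂ) + Complex.exp w) * Complex.exp w) w := by
    intro w hw _
    have habs : ‖(ρ : ℂ) + Complex.exp w - (ρ : ℂ)‖ < δ' := by
      rw [add_sub_cancel_left, Complex.norm_exp]
      calc Real.exp w.re < Real.exp (Real.log δ') := Real.exp_lt_exp.mpr hw
        _ = δ' := Real.exp_log hδ'
    have hne : (ρ : ℂ) + Complex.exp w ≠ (ρ : ℂ) := by
      intro hc
      exact Complex.exp_ne_zero w (by linear_combination hc)
    have h1 : DifferentiableAt ℂ (fun w : ℂ => φ ((ρ : ℂ) + Complex.exp w)) w :=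
      DifferentiableAt.comp w (hφ _ habs hne)
        ((differentiableAt_const _).add Complex.differentiableAt_exp)
    exact h1.mul Complex.differentiableAt_exp
  obtain ⟨H, hH⟩ := stmt19_primitive (X := Real.log δ')
    (x₀ := Real.log δ' - 1) (y₀ := -(Real.pi/2)) (by linarith)
    ⟨by linarith, by linarith⟩ hψ
  refine ⟨fun z => H (Complex.log (Complex.I * (z - (ρ : ℂ))) + (-(Real.pi/2) : ℝ) * Complex.I),
    ?_⟩
  intro z hzb hzu
  have hzρ : z ≠ (ρ : ℂ) := by
    rintro rfl
    simp at hzu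
  set u : ℂ := Complex.I * (z - (ρ : ℂ)) with hu
  have hu0 : u ≠ 0 := by
    simp [hu, sub_ne_zero.mpr hzρ, Complex.I_ne_zero]
  have hure : u.re = -z.im := by simp [hu]
  have huim : u.im = z.re - ρ := by simp [hu]
  have huslit : u ∈ Complex.slitPlane := by
    rw [Complex.mem_slitPlane_iff]
    rcases hzu with h | h
    · right; rw [huim]; simpa [sub_eq_zero] using h
    · left; rw [hure]; linarith
  have habsu : ‖u‖ = ‖z - (ρ : ℂ)‖ := by
    simp [hu]
  set w : ℂ := Complex.log u + (-(Real.pi/2) : ℝ) * Complex.I with hw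
  have hwX : w.re < Real.log δ' := by
    rw [hw, Complex.add_re, Complex.log_re]
    have h0 : 0 < ‖u‖ := by
      rw [habsu]
      exact norm_pos_iff.mpr (sub_ne_zero.mpr hzρ)
    have := Real.log_lt_log h0 (by rw [habsu] at *; exact hzb)
    simpa using this
  have hwY : w.im ∈ Set.Ioo (-(3*Real.pi/2)) (Real.pi/2) := by
    have harg1 := Complex.neg_pi_lt_arg u
    have harg2 : u.arg < Real.pi :=
      lt_of_le_of_ne (Complex.arg_le_pi u) (Complex.mem_slitPlane_iff_arg.mp huslit).1
    constructor <;> · rw [hw]; simp [Complex.log_im]; linarith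
  have hexp : Complex.exp w = z - (ρ : ℂ) := by
    rw [hw, Complex.exp_add, Complex.exp_log hu0]
    have hI : Complex.exp ((-(Real.pi/2) : ℝ) * Complex.I) = -Complex.I := by
      rw [Complex.exp_mul_I, ← Complex.ofReal_cos, ← Complex.ofReal_sin]
      simp
    rw [hI, hu]
    ring_nf
    simp [Complex.I_sq]
    ring
  have hL : HasDerivAt (fun z : ℂ =>
      Complex.log (Complex.I * (z - (ρ : ℂ))) + (-(Real.pi/2) : ℝ) * Complex.I)
      ((z - (ρ : ℂ))⁻¹) z := by
    have h1 : HasDerivAt (fun z : ℂ => Complex.I * (z - (ρ : ℂ))) Complex.I z := by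
      simpa using ((hasDerivAt_id z).sub_const ((ρ : ℂ))).const_mul Complex.I
    have h2 := (Complex.hasDerivAt_log huslit).comp z h1
    have h3 : u⁻¹ * Complex.I = (z - (ρ : ℂ))⁻¹ := by
      rw [hu, mul_inv, Complex.inv_I]
      ring_nf
      simp [Complex.I_sq]
    have h4 := h2.add_const ((-(Real.pi/2) : ℝ) * Complex.I)
    simpa [Function.comp, h3] using h4
  have hHd := hH w hwX hwY
  have hfinal := hHd.comp z hL
  have hval : φ ((ρ : ℂ) + Complex.exp w) * Complex.exp w * (z - (ρ : ℂ))⁻¹ = φ z := by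
    rw [hexp]
    have : (ρ : ℂ) + (z - (ρ : ℂ)) = z := by ring
    rw [this, mul_assoc, mul_inv_cancel₀ (sub_ne_zero.mpr hzρ), mul_one]
  rw [hval] at hfinal
  exact hfinal


set_option maxHeartbeats 2000000 in
/-- for `φ` analytic on the punctured strip `{|Re z − ρ| < 2δ} ∖ {ρ}` with the
Schwarz symmetry `φ(z̄) = conj φ(z)`, and `h` a smooth bump equal to `1` near `ρ` and supported
in `[ρ−δ, ρ+δ]`, one has
`lim_{y→0⁺} (1/π)∫ h(t)·Im φ(t+iy) dt = −Res(φ,ρ)`, where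
`Res(φ,ρ) = (2πi)^{-1} ∮_{C(ρ,δ/2)} φ`. In particular, if `φ` extends analytically to `ρ`,
the limit vanishes. -/
theorem statement19 (ρ δ : ℝ) (hδ : 0 < δ) (φ : ℂ → ℂ)
    (hφ : AnalyticOnNhd ℂ φ ({z : ℂ | |z.re - ρ| < 2 * δ} \ {(ρ : ℂ)}))
    (hsym : ∀ z ∈ {z : ℂ | |z.re - ρ| < 2 * δ} \ {(ρ : ℂ)},
      φ (starRingEnd ℂ z) = starRingEnd ℂ (φ z))
    (h : ℝ → ℝ) (hsmooth : ContDiff ℝ (⊤ : ℕ∞) h)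
    (hrange : ∀ t, 0 ≤ h t ∧ h t ≤ 1)
    (hsupp : Function.support h ⊆ Set.Icc (ρ - δ) (ρ + δ))
    (hone : ∀ t ∈ Set.Icc (ρ - δ / 2) (ρ + δ / 2), h t = 1) :
    Tendsto
      (fun y : ℝ =>
        (((1 / Real.pi) * ∫ t : ℝ, h t * (φ (t + y * Complex.I)).im : ℝ) : ℂ))
      (𝓝[>] 0)
      (𝓝 (-((2 * Real.pi * Complex.I)⁻¹ * ∮ z in C((ρ : ℂ), δ / 2), φ z))) ∧
    (∀ ψ : ℂ → ℂ, AnalyticOnNhd ℂ ψ {z : ℂ | |z.re - ρ| < 2 * δ} →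
      Set.EqOn ψ φ ({z : ℂ | |z.re - ρ| < 2 * δ} \ {(ρ : ℂ)}) →
      Tendsto
        (fun y : ℝ =>
          ((1 / Real.pi) * ∫ t : ℝ, h t * (φ (t + y * Complex.I)).im : ℝ))
        (𝓝[>] 0) (𝓝 0)) := by
  have hpi := Real.pi_pos
  have h2δ : (0:ℝ) < 2*δ := by linarith
  have hφd : ∀ z : ℂ, ‖z - (ρ:ℂ)‖ < 2*δ → z ≠ (ρ:ℂ) → DifferentiableAt ℂ φ z := by
    intro z h1 h2
    refine (hφ z ⟨?_, ?_⟩).differentiableAt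
    · show |z.re - ρ| < 2*δ
      calc |z.re - ρ| = |(z - (ρ:ℂ)).re| := by simp
        _ ≤ ‖z - (ρ:ℂ)‖ := Complex.abs_re_le_norm _
        _ < 2*δ := h1
    · simpa using h2
  have hφc : ∀ z : ℂ, ‖z - (ρ:ℂ)‖ < 2*δ → z ≠ (ρ:ℂ) → ContinuousAt φ z :=
    fun z h1 h2 => (hφd z h1 h2).continuousAt
  obtain ⟨Gp, hGp⟩ := stmt19_up h2δ hφd
  obtain ⟨Gm, hGm⟩ := stmt19_down h2δ hφd
  set a := ρ - 3*δ/2 with ha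
  set b := ρ + 3*δ/2 with hb
  have hab : a ≤ b := by rw [ha, hb]; linarith
  have haρ : a < ρ := by rw [ha]; linarith
  have hρb : ρ < b := by rw [hb]; linarith
  -- membership helpers
  have hmem : ∀ t y : ℝ, |t - ρ| ≤ 3*δ/2 → |y| ≤ δ/2 →
      ‖(t:ℂ) + (y:ℂ)*Complex.I - (ρ:ℂ)‖ < 2*δ := by
    intro t y h1 h2
    have hre : ((t:ℂ) + (y:ℂ)*Complex.I - (ρ:ℂ)).re = t - ρ := by simp
    have him : ((t:ℂ) + (y:ℂ)*Complex.I - (ρ:ℂ)).im = y := by simp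
    have h3 : (‖(t:ℂ) + (y:ℂ)*Complex.I - (ρ:ℂ)‖)^2 < (2*δ)^2 := by
      rw [Complex.sq_norm, Complex.normSq_apply, hre, him]
      nlinarith [sq_abs (t - ρ), sq_abs y, abs_nonneg (t - ρ), abs_nonneg y, mul_pos hδ hδ]
    exact lt_of_pow_lt_pow_left₀ 2 (by linarith) h3
  have hmem2 : ∀ t y : ℝ, |t - ρ| ≤ 3*δ/2 → |y| ≤ δ/2 →
      ‖(t:ℂ) - (y:ℂ)*Complex.I - (ρ:ℂ)‖ < 2*δ := by
    intro t y h1 h2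
    have := hmem t (-y) h1 (by simpa using h2)
    convert this using 2
    push_cast
    ring
  have hmemR : ∀ t : ℝ, |t - ρ| ≤ 3*δ/2 → ‖(t:ℂ) - (ρ:ℂ)‖ < 2*δ := by
    intro t h1
    have : ((t:ℂ) - (ρ:ℂ)) = ((t - ρ : ℝ) : ℂ) := by push_cast; ring
    rw [this, Complex.norm_real, Real.norm_eq_abs]
    linarith
  -- h basics
  have hdh : ∀ x : ℝ, HasDerivAt h (deriv h x) x :=
    fun x => (hsmooth.differentiable (by simp)).differentiableAt.hasDerivAt
  have hdhc : Continuous (deriv h) := hsmooth.continuous_deriv (by simp)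
  have hh0 : ∀ t : ℝ, t ∉ Set.Icc (ρ-δ) (ρ+δ) → h t = 0 := by
    intro t ht
    by_contra hc
    exact ht (hsupp (Function.mem_support.mpr hc))
  have hha : h a = 0 := hh0 a (by rw [ha]; intro hc; simp at hc; linarith [hc.1])
  have hhb : h b = 0 := hh0 b (by rw [hb]; intro hc; simp at hc; linarith [hc.2])
  have hone' : ∀ t : ℝ, |t - ρ| < δ/2 → deriv h t = 0 := by
    intro t ht
    have hev : h =ᶠ[𝓝 t] fun _ => 1 := by
      have hopen : IsOpen {s : ℝ | |s - ρ| < δ/2} := by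
        have : Continuous fun s : ℝ => |s - ρ| := (continuous_id.sub continuous_const).abs
        exact isOpen_lt this continuous_const
      filter_upwards [hopen.mem_nhds ht] with s hs
      have := abs_lt.mp hs
      exact hone s ⟨by linarith [this.1], by linarith [this.2]⟩
    rw [hev.deriv_eq, deriv_const]
  -- endpoint picks
  set pL : ℂ := (ρ:ℂ) - ((δ/2 : ℝ) : ℂ) with hpL
  set pR : ℂ := (ρ:ℂ) + ((δ/2 : ℝ) : ℂ) with hpR
  set cL : ℂ := Gp pL - Gm pL with hcL
  set cR : ℂ := Gp pR - Gm pR with hcR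
  -- constancy on the two half balls
  have hconst : ∀ (q : ℂ → Prop), (∀ w : ℂ, q w → w.re ≠ ρ) → Convex ℝ {w : ℂ | ‖w - (ρ:ℂ)‖ < 2*δ ∧ q w} →
      IsOpen {w : ℂ | ‖w - (ρ:ℂ)‖ < 2*δ ∧ q w} →
      ∀ z w : ℂ, ‖z - (ρ:ℂ)‖ < 2*δ → q z → ‖w - (ρ:ℂ)‖ < 2*δ → q w →
      Gp z - Gm z = Gp w - Gm w := by
    intro q hq hconv hopen z w hz1 hz2 hw1 hw2
    set s : Set ℂ := {w : ℂ | ‖w - (ρ:ℂ)‖ < 2*δ ∧ q w} with hs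
    have hd0 : ∀ u ∈ s, HasDerivAt (fun u => Gp u - Gm u) 0 u := by
      intro u hu
      have h1 := hGp u hu.1 (Or.inl (hq u hu.2))
      have h2 := hGm u hu.1 (Or.inl (hq u hu.2))
      have h3 := h1.sub h2
      rwa [sub_self] at h3
    have hF : ∀ u ∈ s, HasFDerivAt (fun u => Gp u - Gm u) (0 : ℂ →L[ℝ] ℂ) u := by
      intro u hu
      have h0 := (hd0 u hu).hasFDerivAt.restrictScalars ℝ
      refine h0.congr_fderiv ?_
      ext1
      simp
    have hfd : ∀ u ∈ s, fderivWithin ℝ (fun u => Gp u - Gm u) s u = 0 := by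
      intro u hu
      rw [fderivWithin_of_isOpen hopen hu]
      exact (hF u hu).fderiv
    exact hconv.is_const_of_fderivWithin_eq_zero
      (fun u hu => (hF u hu).differentiableAt.differentiableWithinAt) hfd ⟨hz1, hz2⟩ ⟨hw1, hw2⟩
  have hballeq : ∀ c : ℝ, {w : ℂ | ‖w - (ρ:ℂ)‖ < 2*δ ∧ w.re < c}
      = Metric.ball (ρ:ℂ) (2*δ) ∩ {w : ℂ | w.re < c} := by
    intro c; ext w; simp [Metric.mem_ball, Complex.dist_eq]
  have hballeq' : ∀ c : ℝ, {w : ℂ | ‖w - (ρ:ℂ)‖ < 2*δ ∧ c < w.re}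
      = Metric.ball (ρ:ℂ) (2*δ) ∩ {w : ℂ | c < w.re} := by
    intro c; ext w; simp [Metric.mem_ball, Complex.dist_eq]
  have hpLre : pL.re = ρ - δ/2 := by rw [hpL]; simp
  have hpRre : pR.re = ρ + δ/2 := by rw [hpR]; simp
  have hpLabs : ‖pL - (ρ:ℂ)‖ < 2*δ := by
    rw [hpL]
    have heq : (ρ:ℂ) - ((δ/2 : ℝ):ℂ) - (ρ:ℂ) = -((δ/2 : ℝ):ℂ) := by ring
    rw [heq, norm_neg, Complex.norm_real, Real.norm_eq_abs, abs_of_pos (half_pos hδ)]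
    linarith
  have hpRabs : ‖pR - (ρ:ℂ)‖ < 2*δ := by
    rw [hpR]
    have heq : (ρ:ℂ) + ((δ/2 : ℝ):ℂ) - (ρ:ℂ) = ((δ/2 : ℝ):ℂ) := by ring
    rw [heq, Complex.norm_real, Real.norm_eq_abs, abs_of_pos (half_pos hδ)]
    linarith
  have hconstL : ∀ z : ℂ, ‖z - (ρ:ℂ)‖ < 2*δ → z.re < ρ → Gp z - Gm z = cL := by
    intro z hz1 hz2
    refine hconst (fun w => w.re < ρ) (fun w hw => ne_of_lt hw) ?_ ?_ z pL hz1 hz2 hpLabs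
      (by simp only [hpLre]; linarith)
    · rw [hballeq]
      exact (convex_ball _ _).inter (convex_halfSpace_re_lt _)
    · rw [hballeq]
      exact Metric.isOpen_ball.inter (isOpen_lt Complex.continuous_re continuous_const)
  have hconstR : ∀ z : ℂ, ‖z - (ρ:ℂ)‖ < 2*δ → ρ < z.re → Gp z - Gm z = cR := by
    intro z hz1 hz2
    refine hconst (fun w => ρ < w.re) (fun w hw => (ne_of_lt hw).symm) ?_ ?_ z pR hz1 hz2 hpRabs
      (by simp only [hpRre]; linarith)
    · rw [hballeq']
      exact (convex_ball _ _).inter (convex_halfSpace_re_gt _)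
    · rw [hballeq']
      exact Metric.isOpen_ball.inter (isOpen_lt continuous_const Complex.continuous_re)
  -- circle integral equals cL - cR
  have hcirc : (∮ z in C((ρ : ℂ), δ / 2), φ z) = cL - cR := by
    have hδ2 : (0:ℝ) < δ/2 := half_pos hδ
    have hwabs : ∀ θ : ℝ, ‖circleMap (ρ:ℂ) (δ/2) θ - (ρ:ℂ)‖ < 2*δ := by
      intro θ
      rw [circleMap_sub_center, norm_circleMap_zero, abs_of_pos hδ2]
      linarith
    have hwne : ∀ θ : ℝ, circleMap (ρ:ℂ) (δ/2) θ ≠ (ρ:ℂ) :=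
      fun θ => circleMap_ne_center (ne_of_gt hδ2)
    have hre : ∀ θ : ℝ, (circleMap (ρ:ℂ) (δ/2) θ).re = ρ + (δ/2) * Real.cos θ := by
      intro θ
      simp [circleMap, Complex.exp_ofReal_mul_I_re, Complex.exp_ofReal_mul_I_im]
    have him : ∀ θ : ℝ, (circleMap (ρ:ℂ) (δ/2) θ).im = (δ/2) * Real.sin θ := by
      intro θ
      simp [circleMap, Complex.exp_ofReal_mul_I_re, Complex.exp_ofReal_mul_I_im]
    have hcond_ne : ∀ θ : ℝ, Real.sin θ = 0 → (circleMap (ρ:ℂ) (δ/2) θ).re ≠ ρ := by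
      intro θ hs0
      rw [hre θ]
      intro hc
      have hcos : Real.cos θ = 0 := by
        have h5 : (δ/2) * Real.cos θ = 0 := by linarith
        rcases mul_eq_zero.mp h5 with h' | h'
        · linarith
        · exact h'
      nlinarith [Real.sin_sq_add_cos_sq θ]
    have hcond_p : ∀ θ ∈ Set.uIcc (0:ℝ) Real.pi,
        ((circleMap (ρ:ℂ) (δ/2) θ).re ≠ ρ ∨ 0 < (circleMap (ρ:ℂ) (δ/2) θ).im) := by
      intro θ hθ
      rw [Set.uIcc_of_le hpi.le] at hθ
      have hsin : 0 ≤ Real.sin θ := Real.sin_nonneg_of_nonneg_of_le_pi hθ.1 hθ.2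
      rcases eq_or_lt_of_le hsin with hs0 | hs
      · exact Or.inl (hcond_ne θ hs0.symm)
      · right
        rw [him θ]
        exact mul_pos hδ2 hs
    have hcond_m : ∀ θ ∈ Set.uIcc Real.pi (2*Real.pi),
        ((circleMap (ρ:ℂ) (δ/2) θ).re ≠ ρ ∨ (circleMap (ρ:ℂ) (δ/2) θ).im < 0) := by
      intro θ hθ
      rw [Set.uIcc_of_le (by linarith)] at hθ
      have hsin : Real.sin θ ≤ 0 := by
        have h2 := Real.sin_nonpos_of_nonpos_of_neg_pi_le
          (show θ - 2*Real.pi ≤ 0 by linarith [hθ.2]) (show -Real.pi ≤ θ - 2*Real.pi by linarith [hθ.1])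
        rwa [Real.sin_sub_two_pi] at h2
      rcases eq_or_lt_of_le hsin with hs0 | hs
      · exact Or.inl (hcond_ne θ hs0)
      · right
        rw [him θ]
        exact mul_neg_of_pos_of_neg hδ2 hs
    have hci : ∀ p q : ℝ, ContinuousOn
        (fun θ : ℝ => deriv (circleMap (ρ:ℂ) (δ/2)) θ • φ (circleMap (ρ:ℂ) (δ/2) θ))
        (Set.uIcc p q) := by
      intro p q θ hθ
      apply ContinuousAt.continuousWithinAt
      have hc1 : ContinuousAt (fun θ : ℝ => deriv (circleMap (ρ:ℂ) (δ/2)) θ) θ := by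
        simp only [deriv_circleMap]
        exact ((continuous_circleMap 0 (δ/2)).mul continuous_const).continuousAt
      have hc2 : ContinuousAt (fun θ : ℝ => φ (circleMap (ρ:ℂ) (δ/2) θ)) θ := by
        have h4 := ContinuousAt.comp (x := θ) (by exact hφc _ (hwabs θ) (hwne θ))
          (continuous_circleMap (ρ:ℂ) (δ/2)).continuousAt
        exact h4
      exact hc1.smul hc2
    have harc_p : (∫ θ in (0:ℝ)..Real.pi,
        deriv (circleMap (ρ:ℂ) (δ/2)) θ • φ (circleMap (ρ:ℂ) (δ/2) θ))
        = Gp (circleMap (ρ:ℂ) (δ/2) Real.pi) - Gp (circleMap (ρ:ℂ) (δ/2) 0) := by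
      refine intervalIntegral.integral_eq_sub_of_hasDerivAt
        (f := fun θ : ℝ => Gp (circleMap (ρ:ℂ) (δ/2) θ)) ?_ ((hci 0 Real.pi).intervalIntegrable)
      intro θ hθ
      have hz := hGp _ (hwabs θ) (hcond_p θ hθ)
      have hcomp := hz.complexToReal_fderiv.comp_hasDerivAt θ
        (hasDerivAt_circleMap (ρ:ℂ) (δ/2) θ)
      simp only [deriv_circleMap]
      convert hcomp using 1
      · rfl
      simp [mul_comm]
    have harc_m : (∫ θ in Real.pi..(2*Real.pi),
        deriv (circleMap (ρ:ℂ) (δ/2)) θ • φ (circleMap (ρ:ℂ) (δ/2) θ))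
        = Gm (circleMap (ρ:ℂ) (δ/2) (2*Real.pi)) - Gm (circleMap (ρ:ℂ) (δ/2) Real.pi) := by
      refine intervalIntegral.integral_eq_sub_of_hasDerivAt
        (f := fun θ : ℝ => Gm (circleMap (ρ:ℂ) (δ/2) θ)) ?_
        ((hci Real.pi (2*Real.pi)).intervalIntegrable)
      intro θ hθ
      have hz := hGm _ (hwabs θ) (hcond_m θ hθ)
      have hcomp := hz.complexToReal_fderiv.comp_hasDerivAt θ
        (hasDerivAt_circleMap (ρ:ℂ) (δ/2) θ)
      simp only [deriv_circleMap]
      convert hcomp using 1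
      · rfl
      simp [mul_comm]
    have hv0 : circleMap (ρ:ℂ) (δ/2) 0 = pR := by
      rw [hpR]
      simp [circleMap]
    have hvπ : circleMap (ρ:ℂ) (δ/2) Real.pi = pL := by
      rw [hpL]
      rw [show circleMap (ρ:ℂ) (δ/2) Real.pi = (ρ:ℂ) + ((δ/2:ℝ):ℂ) * Complex.exp ((Real.pi:ℂ) * Complex.I) from rfl]
      rw [Complex.exp_pi_mul_I]
      ring
    have hv2π : circleMap (ρ:ℂ) (δ/2) (2*Real.pi) = pR := by
      rw [hpR]
      rw [show circleMap (ρ:ℂ) (δ/2) (2*Real.pi) = (ρ:ℂ) + ((δ/2:ℝ):ℂ) * Complex.exp (((2*Real.pi : ℝ):ℂ) * Complex.I) from rfl]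
      rw [show (((2*Real.pi : ℝ):ℂ) * Complex.I) = 2 * (Real.pi:ℂ) * Complex.I by push_cast; ring]
      rw [Complex.exp_two_pi_mul_I]
      ring
    have hsplit : (∮ z in C((ρ : ℂ), δ / 2), φ z)
        = (∫ θ in (0:ℝ)..Real.pi, deriv (circleMap (ρ:ℂ) (δ/2)) θ • φ (circleMap (ρ:ℂ) (δ/2) θ))
          + ∫ θ in Real.pi..(2*Real.pi),
            deriv (circleMap (ρ:ℂ) (δ/2)) θ • φ (circleMap (ρ:ℂ) (δ/2) θ) := by
      rw [intervalIntegral.integral_add_adjacent_intervals ((hci 0 Real.pi).intervalIntegrable)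
        ((hci Real.pi (2*Real.pi)).intervalIntegrable)]
      rfl
    rw [hsplit, harc_p, harc_m, hv0, hvπ, hv2π, hcL, hcR]
    ring
  -- the deformed integral
  set V : ℝ → ℂ := fun y => ∫ t in a..b,
      ((deriv h t : ℝ) : ℂ) * (Gp ((t:ℂ) + (y:ℂ)*Complex.I) - Gm ((t:ℂ) - (y:ℂ)*Complex.I)) with hV
  have htabs : ∀ t ∈ Set.uIcc a b, |t - ρ| ≤ 3*δ/2 := by
    intro t ht
    rw [Set.uIcc_of_le hab] at ht
    rw [ha] at ht
    rw [hb] at ht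
    exact abs_le.mpr ⟨by linarith [ht.1], by linarith [ht.2]⟩
  have hIBP : ∀ (v v' : ℝ → ℂ), (∀ x ∈ Set.uIcc a b, HasDerivAt v (v' x) x) →
      IntervalIntegrable v' volume a b →
      (∫ t in a..b, ((h t : ℝ):ℂ) * v' t) = - ∫ t in a..b, ((deriv h t : ℝ):ℂ) * v t := by
    intro v v' hv hv'
    have hu : ∀ x ∈ Set.uIcc a b, HasDerivAt (fun s : ℝ => ((h s : ℝ):ℂ)) ((deriv h x : ℝ):ℂ) x :=
      fun x _ => (hdh x).ofReal_comp
    have hu' : IntervalIntegrable (fun s : ℝ => ((deriv h s : ℝ):ℂ)) volume a b :=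
      (Complex.continuous_ofReal.comp hdhc).intervalIntegrable _ _
    have hres := intervalIntegral.integral_mul_deriv_eq_deriv_mul hu hv hu' hv'
    rw [hha, hhb] at hres
    simpa using hres
  have hcurveP : ∀ (G : ℂ → ℂ) (c gz : ℂ) (x : ℝ), HasDerivAt G gz ((x:ℂ) + c) →
      HasDerivAt (fun t : ℝ => G ((t:ℂ) + c)) gz x := by
    intro G c gz x hG
    have h1 := hG.comp ((x:ℂ)) ((hasDerivAt_id ((x:ℂ))).add_const c)
    simp only [mul_one] at h1
    exact HasDerivAt.comp_ofReal h1
  have hcurveM : ∀ (G : ℂ → ℂ) (c gz : ℂ) (x : ℝ), HasDerivAt G gz ((x:ℂ) - c) →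
      HasDerivAt (fun t : ℝ => G ((t:ℂ) - c)) gz x := by
    intro G c gz x hG
    have h1 := hG.comp ((x:ℂ)) ((hasDerivAt_id ((x:ℂ))).sub_const c)
    simp only [mul_one] at h1
    exact HasDerivAt.comp_ofReal h1
  have HA : ∀ y : ℝ, y ∈ Set.Ioo (0:ℝ) (δ/2) →
      (((1/Real.pi) * ∫ t : ℝ, h t * (φ ((t:ℂ) + (y:ℂ) * Complex.I)).im : ℝ) : ℂ)
        = (2*(Real.pi:ℂ)*Complex.I)⁻¹ * (- V y) := by
    intro y hy
    have hyne : y ≠ 0 := ne_of_gt hy.1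
    have hyle : |y| ≤ δ/2 := by rw [abs_of_pos hy.1]; exact hy.2.le
    have himp : ∀ t : ℝ, ((t:ℂ) + (y:ℂ)*Complex.I).im = y := by intro t; simp
    have himm : ∀ t : ℝ, ((t:ℂ) - (y:ℂ)*Complex.I).im = -y := by intro t; simp
    -- continuity of φ along the two horizontal lines
    have hφcontp : ContinuousOn (fun t : ℝ => φ ((t:ℂ) + (y:ℂ)*Complex.I)) (Set.uIcc a b) := by
      intro t ht
      apply ContinuousAt.continuousWithinAt
      have hzne : ((t:ℂ) + (y:ℂ)*Complex.I) ≠ (ρ:ℂ) := by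
        intro hc
        have := congrArg Complex.im hc
        rw [himp] at this
        simp at this
        exact hyne this
      have hin : Continuous (fun s : ℝ => (s:ℂ) + (y:ℂ)*Complex.I) := by fun_prop
      have h4 := ContinuousAt.comp (x := t)
        (by exact hφc _ (hmem t y (htabs t ht) hyle) hzne) hin.continuousAt
      exact h4
    have hφcontm : ContinuousOn (fun t : ℝ => φ ((t:ℂ) - (y:ℂ)*Complex.I)) (Set.uIcc a b) := by
      intro t ht
      apply ContinuousAt.continuousWithinAt
      have hzne : ((t:ℂ) - (y:ℂ)*Complex.I) ≠ (ρ:ℂ) := by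
        intro hc
        have := congrArg Complex.im hc
        rw [himm] at this
        simp at this
        exact hyne this
      have hin : Continuous (fun s : ℝ => (s:ℂ) - (y:ℂ)*Complex.I) := by fun_prop
      have h4 := ContinuousAt.comp (x := t)
        (by exact hφc _ (hmem2 t y (htabs t ht) hyle) hzne) hin.continuousAt
      exact h4
    -- derivatives of the primitives along the two lines
    have hvP : ∀ x ∈ Set.uIcc a b, HasDerivAt (fun t : ℝ => Gp ((t:ℂ) + (y:ℂ)*Complex.I))
        (φ ((x:ℂ) + (y:ℂ)*Complex.I)) x := by
      intro x hx
      refine hcurveP Gp _ _ x (hGp _ (hmem x y (htabs x hx) hyle) ?_)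
      exact Or.inr (by rw [himp]; exact hy.1)
    have hvM : ∀ x ∈ Set.uIcc a b, HasDerivAt (fun t : ℝ => Gm ((t:ℂ) - (y:ℂ)*Complex.I))
        (φ ((x:ℂ) - (y:ℂ)*Complex.I)) x := by
      intro x hx
      refine hcurveM Gm _ _ x (hGm _ (hmem2 x y (htabs x hx) hyle) ?_)
      exact Or.inr (by rw [himm]; linarith [hy.1])
    -- restrict the integral
    have h1 : (∫ t : ℝ, h t * (φ ((t:ℂ) + (y:ℂ)*Complex.I)).im)
        = ∫ t in a..b, h t * (φ ((t:ℂ) + (y:ℂ)*Complex.I)).im := by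
      have hsub : Function.support (fun t : ℝ => h t * (φ ((t:ℂ) + (y:ℂ)*Complex.I)).im)
          ⊆ Set.Ioc a b := by
        intro t ht
        rw [Function.mem_support] at ht
        have hht : h t ≠ 0 := fun hc => ht (by rw [hc]; ring)
        have hmem' := hsupp (Function.mem_support.mpr hht)
        exact ⟨by rw [ha]; linarith [hmem'.1], by rw [hb]; linarith [hmem'.2]⟩
      rw [intervalIntegral.integral_of_le hab, ← MeasureTheory.integral_indicator measurableSet_Ioc,
        Set.indicator_eq_self.mpr hsub]
    rw [h1, Complex.ofReal_mul, ← intervalIntegral.integral_ofReal]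
    have him2 : ∀ w : ℂ, ((w.im : ℝ) : ℂ) = (w - (starRingEnd ℂ) w) / (2*Complex.I) := by
      intro w
      rw [Complex.sub_conj]
      push_cast
      field_simp
    have h2 : ∀ t ∈ Set.uIcc a b, ((h t * (φ ((t:ℂ) + (y:ℂ)*Complex.I)).im : ℝ) : ℂ)
        = (2*Complex.I)⁻¹ * (((h t : ℝ):ℂ) * φ ((t:ℂ) + (y:ℂ)*Complex.I)
            - ((h t : ℝ):ℂ) * φ ((t:ℂ) - (y:ℂ)*Complex.I)) := by
      intro t ht
      have hzmem : ((t:ℂ) + (y:ℂ)*Complex.I) ∈ ({z : ℂ | |z.re - ρ| < 2 * δ} \ {(ρ:ℂ)}) := by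
        constructor
        · show |((t:ℂ) + (y:ℂ)*Complex.I).re - ρ| < 2*δ
          have hre' : ((t:ℂ) + (y:ℂ)*Complex.I).re = t := by simp
          rw [hre']
          exact lt_of_le_of_lt (htabs t ht) (by linarith)
        · simp only [Set.mem_singleton_iff]
          intro hc
          have := congrArg Complex.im hc
          rw [himp] at this
          simp at this
          exact hyne this
      have hconj := hsym _ hzmem
      have hcz : (starRingEnd ℂ) ((t:ℂ) + (y:ℂ)*Complex.I) = (t:ℂ) - (y:ℂ)*Complex.I := by
        rw [map_add, map_mul, Complex.conj_ofReal, Complex.conj_ofReal, Complex.conj_I]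
        ring
      rw [hcz] at hconj
      push_cast
      rw [him2 (φ ((t:ℂ) + (y:ℂ)*Complex.I)), ← hconj]
      field_simp
    rw [intervalIntegral.integral_congr (fun t ht => h2 t ht)]
    rw [intervalIntegral.integral_const_mul]
    have hip : IntervalIntegrable (fun t : ℝ => ((h t : ℝ):ℂ) * φ ((t:ℂ) + (y:ℂ)*Complex.I))
        volume a b :=
      (((Complex.continuous_ofReal.comp hsmooth.continuous).continuousOn).mul
        hφcontp).intervalIntegrable
    have him' : IntervalIntegrable (fun t : ℝ => ((h t : ℝ):ℂ) * φ ((t:ℂ) - (y:ℂ)*Complex.I))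
        volume a b :=
      (((Complex.continuous_ofReal.comp hsmooth.continuous).continuousOn).mul
        hφcontm).intervalIntegrable
    rw [intervalIntegral.integral_sub hip him']
    rw [hIBP (fun t : ℝ => Gp ((t:ℂ) + (y:ℂ)*Complex.I))
        (fun t : ℝ => φ ((t:ℂ) + (y:ℂ)*Complex.I)) hvP hφcontp.intervalIntegrable]
    rw [hIBP (fun t : ℝ => Gm ((t:ℂ) - (y:ℂ)*Complex.I))
        (fun t : ℝ => φ ((t:ℂ) - (y:ℂ)*Complex.I)) hvM hφcontm.intervalIntegrable]
    -- split V y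
    have hgp : IntervalIntegrable
        (fun t : ℝ => ((deriv h t : ℝ):ℂ) * Gp ((t:ℂ) + (y:ℂ)*Complex.I)) volume a b := by
      refine ContinuousOn.intervalIntegrable ?_
      refine ((Complex.continuous_ofReal.comp hdhc).continuousOn).mul ?_
      intro t ht
      exact ((hvP t ht).continuousAt).continuousWithinAt
    have hgm : IntervalIntegrable
        (fun t : ℝ => ((deriv h t : ℝ):ℂ) * Gm ((t:ℂ) - (y:ℂ)*Complex.I)) volume a b := by
      refine ContinuousOn.intervalIntegrable ?_
      refine ((Complex.continuous_ofReal.comp hdhc).continuousOn).mul ?_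
      intro t ht
      exact ((hvM t ht).continuousAt).continuousWithinAt
    have hVsplit : V y = (∫ t in a..b, ((deriv h t : ℝ):ℂ) * Gp ((t:ℂ) + (y:ℂ)*Complex.I))
        - ∫ t in a..b, ((deriv h t : ℝ):ℂ) * Gm ((t:ℂ) - (y:ℂ)*Complex.I) := by
      simp only [hV]
      rw [← intervalIntegral.integral_sub hgp hgm]
      congr 1
      funext t
      ring
    rw [hVsplit]
    have hπ : (Real.pi : ℂ) ≠ 0 := Complex.ofReal_ne_zero.mpr (ne_of_gt hpi)
    push_cast
    field_simp
    ring
  have hVlim : Tendsto V (𝓝[>] (0:ℝ))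
      (𝓝 (∫ t in a..b, ((deriv h t : ℝ) : ℂ) * (Gp (t:ℂ) - Gm (t:ℂ)))) := by
    -- compact sets for uniform bounds
    set K0 : Set ℝ := Set.Icc a b ∩ {x : ℝ | δ/4 ≤ |x - ρ|} with hK0
    have hK0closed : IsClosed K0 :=
      isClosed_Icc.inter (isClosed_le continuous_const ((continuous_id.sub continuous_const).abs))
    set Kp : Set ℂ := K0 ×ℂ (Set.Icc 0 (δ/2)) with hKp
    set Km : Set ℂ := K0 ×ℂ (Set.Icc (-(δ/2)) 0) with hKm
    have hbdd : ∀ (J : Set ℝ), J ⊆ Set.Icc (-(δ/2)) (δ/2) → Bornology.IsBounded (K0 ×ℂ J) := by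
      intro J hJ
      refine (Metric.isBounded_closedBall (x := (ρ:ℂ)) (r := 2*δ)).subset ?_
      intro z hz
      rw [Complex.mem_reProdIm] at hz
      have h1 : |z.re - ρ| ≤ 3*δ/2 := by
        have := hz.1.1
        rw [ha, hb] at this
        exact abs_le.mpr ⟨by linarith [this.1], by linarith [this.2]⟩
      have h2 : |z.im| ≤ δ/2 := by
        have := hJ hz.2
        exact abs_le.mpr ⟨this.1, this.2⟩
      rw [Metric.mem_closedBall, Complex.dist_eq]
      calc ‖z - (ρ:ℂ)‖ ≤ |(z - (ρ:ℂ)).re| + |(z - (ρ:ℂ)).im| :=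
            Complex.norm_le_abs_re_add_abs_im _
        _ ≤ 3*δ/2 + δ/2 := by
            refine add_le_add ?_ ?_
            · simpa using h1
            · simpa using h2
        _ = 2*δ := by ring
    have hKpcomp : IsCompact Kp :=
      Metric.isCompact_of_isClosed_isBounded (hK0closed.reProdIm isClosed_Icc)
        (hbdd _ (Set.Icc_subset_Icc (by linarith) (le_refl _)))
    have hKmcomp : IsCompact Km :=
      Metric.isCompact_of_isClosed_isBounded (hK0closed.reProdIm isClosed_Icc)
        (hbdd _ (Set.Icc_subset_Icc (le_refl _) (by linarith)))
    have hKabs : ∀ z : ℂ, z.re ∈ K0 → |z.im| ≤ δ/2 → ‖z - (ρ:ℂ)‖ < 2*δ := by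
      intro z hz1 hz2
      have h1 : |z.re - ρ| ≤ 3*δ/2 := by
        have := hz1.1
        rw [ha, hb] at this
        exact abs_le.mpr ⟨by linarith [this.1], by linarith [this.2]⟩
      have := hmem z.re z.im h1 hz2
      rwa [Complex.re_add_im] at this
    have hKne : ∀ z : ℂ, z.re ∈ K0 → z.re ≠ ρ := by
      intro z hz1
      have := hz1.2
      intro hc
      rw [hc] at this
      simp only [Set.mem_setOf_eq, sub_self, abs_zero] at this
      linarith
    have hGpK : ContinuousOn Gp Kp := by
      intro z hz
      rw [hKp, Complex.mem_reProdIm] at hz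
      have habs := hKabs z hz.1 (abs_le.mpr ⟨by linarith [hz.2.1, hδ], hz.2.2⟩)
      exact ((hGp z habs (Or.inl (hKne z hz.1))).continuousAt).continuousWithinAt
    have hGmK : ContinuousOn Gm Km := by
      intro z hz
      rw [hKm, Complex.mem_reProdIm] at hz
      have habs := hKabs z hz.1 (abs_le.mpr ⟨hz.2.1, by linarith [hz.2.2, hδ]⟩)
      exact ((hGm z habs (Or.inl (hKne z hz.1))).continuousAt).continuousWithinAt
    obtain ⟨Mp, hMp⟩ := hKpcomp.exists_bound_of_continuousOn hGpK
    obtain ⟨Mm, hMm⟩ := hKmcomp.exists_bound_of_continuousOn hGmK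
    -- rewrite as set integrals
    have hVset : V = fun y : ℝ => ∫ t in Set.Ioc a b,
        ((deriv h t : ℝ):ℂ) * (Gp ((t:ℂ) + (y:ℂ)*Complex.I) - Gm ((t:ℂ) - (y:ℂ)*Complex.I))
          ∂volume := by
      funext y
      simp only [hV]
      rw [intervalIntegral.integral_of_le hab]
    rw [hVset, intervalIntegral.integral_of_le hab]
    refine MeasureTheory.tendsto_integral_filter_of_dominated_convergence
      (fun t => ‖((deriv h t : ℝ):ℂ)‖ * (Mp + Mm)) ?_ ?_ ?_ ?_
    · -- measurability
      filter_upwards [Ioo_mem_nhdsGT (half_pos hδ)] with y hy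
      refine (ContinuousOn.aestronglyMeasurable ?_ measurableSet_Ioc)
      intro t ht
      apply ContinuousAt.continuousWithinAt
      have habs : |t - ρ| ≤ 3*δ/2 := by
        rw [ha, hb] at ht
        exact abs_le.mpr ⟨by linarith [ht.1], by linarith [ht.2]⟩
      have hyle : |y| ≤ δ/2 := by rw [abs_of_pos hy.1]; exact hy.2.le
      have hp : ContinuousAt (fun s : ℝ => Gp ((s:ℂ) + (y:ℂ)*Complex.I)) t := by
        have hGc : ContinuousAt Gp ((t:ℂ) + (y:ℂ)*Complex.I) :=
          (hGp _ (hmem t y habs hyle) (Or.inr (by simpa using hy.1))).continuousAt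
        have hin : Continuous (fun s : ℝ => (s:ℂ) + (y:ℂ)*Complex.I) := by fun_prop
        have h4 := ContinuousAt.comp (x := t) (by exact hGc) hin.continuousAt
        exact h4
      have hm : ContinuousAt (fun s : ℝ => Gm ((s:ℂ) - (y:ℂ)*Complex.I)) t := by
        have himm' : ((t:ℂ) - (y:ℂ)*Complex.I).im = -y := by simp
        have hGc : ContinuousAt Gm ((t:ℂ) - (y:ℂ)*Complex.I) :=
          (hGm _ (hmem2 t y habs hyle) (Or.inr (by rw [himm']; linarith [hy.1]))).continuousAt
        have hin : Continuous (fun s : ℝ => (s:ℂ) - (y:ℂ)*Complex.I) := by fun_prop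
        have h4 := ContinuousAt.comp (x := t) (by exact hGc) hin.continuousAt
        exact h4
      exact ((Complex.continuous_ofReal.comp hdhc).continuousAt).mul (hp.sub hm)
    · -- bound
      filter_upwards [Ioo_mem_nhdsGT (half_pos hδ)] with y hy
      rw [MeasureTheory.ae_restrict_iff' measurableSet_Ioc]
      refine MeasureTheory.ae_of_all _ ?_
      intro t ht
      by_cases hc : |t - ρ| < δ/4
      · have hd0 : deriv h t = 0 := hone' t (by linarith)
        simp [hd0]
      · push_neg at hc
        have htK0 : t ∈ K0 := ⟨⟨ht.1.le, ht.2⟩, hc⟩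
        have hzp : ((t:ℂ) + (y:ℂ)*Complex.I) ∈ Kp := by
          rw [hKp, Complex.mem_reProdIm]
          constructor
          · simpa using htK0
          · simp only [Complex.add_im, Complex.ofReal_im, Complex.mul_I_im, Complex.ofReal_re,
              zero_add]
            exact ⟨hy.1.le, hy.2.le⟩
        have hzm : ((t:ℂ) - (y:ℂ)*Complex.I) ∈ Km := by
          rw [hKm, Complex.mem_reProdIm]
          constructor
          · simpa using htK0
          · simp only [Complex.sub_im, Complex.ofReal_im, Complex.mul_I_im, Complex.ofReal_re,
              zero_sub]
            exact ⟨by linarith [hy.2], by linarith [hy.1]⟩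
        rw [norm_mul]
        refine mul_le_mul_of_nonneg_left ?_ (norm_nonneg _)
        calc ‖Gp ((t:ℂ) + (y:ℂ)*Complex.I) - Gm ((t:ℂ) - (y:ℂ)*Complex.I)‖
            ≤ ‖Gp ((t:ℂ) + (y:ℂ)*Complex.I)‖ + ‖Gm ((t:ℂ) - (y:ℂ)*Complex.I)‖ := norm_sub_le _ _
          _ ≤ Mp + Mm := add_le_add (hMp _ hzp) (hMm _ hzm)
    · -- bound integrable
      refine MeasureTheory.Integrable.mono_measure ?_
        (MeasureTheory.Measure.restrict_mono Set.Ioc_subset_Icc_self (le_refl _))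
      exact (((Complex.continuous_ofReal.comp hdhc).norm.mul
        continuous_const).continuousOn).integrableOn_compact isCompact_Icc
    · -- pointwise limits
      rw [MeasureTheory.ae_restrict_iff' measurableSet_Ioc]
      refine MeasureTheory.ae_of_all _ ?_
      intro t ht
      by_cases hc : |t - ρ| < δ/2
      · have hd0 : deriv h t = 0 := hone' t hc
        simp only [hd0, Complex.ofReal_zero, zero_mul]
        exact tendsto_const_nhds
      · push_neg at hc
        have htne : t ≠ ρ := by
          intro hc2
          rw [hc2] at hc
          simp only [sub_self, abs_zero] at hc
          linarith
        have habs : |t - ρ| ≤ 3*δ/2 := by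
          rw [ha, hb] at ht
          exact abs_le.mpr ⟨by linarith [ht.1], by linarith [ht.2]⟩
        have hGpc : ContinuousAt Gp ((t:ℂ)) :=
          (hGp (t:ℂ) (by simpa using hmemR t habs) (Or.inl (by simpa using htne))).continuousAt
        have hGmc : ContinuousAt Gm ((t:ℂ)) :=
          (hGm (t:ℂ) (by simpa using hmemR t habs) (Or.inl (by simpa using htne))).continuousAt
        have hcurve_p : Tendsto (fun y : ℝ => ((t:ℂ) + (y:ℂ)*Complex.I)) (𝓝[>] 0)
            (𝓝 ((t:ℂ))) := by
          have hcont : Continuous (fun y : ℝ => ((t:ℂ) + (y:ℂ)*Complex.I)) := by fun_prop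
          have h5 : Tendsto (fun y : ℝ => ((t:ℂ) + (y:ℂ)*Complex.I)) (𝓝[>] 0)
              (𝓝 ((t:ℂ) + ((0:ℝ):ℂ)*Complex.I)) :=
            (hcont.tendsto 0).mono_left nhdsWithin_le_nhds
          simpa using h5
        have hcurve_m : Tendsto (fun y : ℝ => ((t:ℂ) - (y:ℂ)*Complex.I)) (𝓝[>] 0)
            (𝓝 ((t:ℂ))) := by
          have hcont : Continuous (fun y : ℝ => ((t:ℂ) - (y:ℂ)*Complex.I)) := by fun_prop
          have h5 : Tendsto (fun y : ℝ => ((t:ℂ) - (y:ℂ)*Complex.I)) (𝓝[>] 0)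
              (𝓝 ((t:ℂ) - ((0:ℝ):ℂ)*Complex.I)) :=
            (hcont.tendsto 0).mono_left nhdsWithin_le_nhds
          simpa using h5
        have h6 : Tendsto (fun y : ℝ => Gp ((t:ℂ) + (y:ℂ)*Complex.I)) (𝓝[>] 0)
            (𝓝 (Gp ((t:ℂ)))) := by
          have := hGpc.tendsto.comp hcurve_p
          exact this
        have h7 : Tendsto (fun y : ℝ => Gm ((t:ℂ) - (y:ℂ)*Complex.I)) (𝓝[>] 0)
            (𝓝 (Gm ((t:ℂ)))) := by
          have := hGmc.tendsto.comp hcurve_m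
          exact this
        exact (h6.sub h7).const_mul _
  have hE : (∫ t in a..b, ((deriv h t : ℝ) : ℂ) * (Gp (t:ℂ) - Gm (t:ℂ))) = cL - cR := by
    have hcontE : ∀ t : ℝ, |t - ρ| ≤ 3*δ/2 → ContinuousAt
        (fun s : ℝ => ((deriv h s : ℝ):ℂ) * (Gp ((s:ℂ)) - Gm ((s:ℂ)))) t := by
      intro t htabs'
      by_cases hc : |t - ρ| < δ/2
      · have hopen : IsOpen {s : ℝ | |s - ρ| < δ/2} :=
          isOpen_lt ((continuous_id.sub continuous_const).abs) continuous_const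
        refine Filter.EventuallyEq.continuousAt (y := 0) ?_
        filter_upwards [hopen.mem_nhds hc] with s hs
        rw [hone' s hs]
        simp
      · push_neg at hc
        have htne : t ≠ ρ := by
          intro hc2
          rw [hc2] at hc
          simp only [sub_self, abs_zero] at hc
          linarith
        have hGpc : ContinuousAt (fun s : ℝ => Gp ((s:ℂ))) t := by
          have hGc : ContinuousAt Gp ((t:ℂ)) :=
            (hGp (t:ℂ) (by simpa using hmemR t htabs') (Or.inl (by simpa using htne))).continuousAt
          have h4 := ContinuousAt.comp (x := t) (by exact hGc)
            Complex.continuous_ofReal.continuousAt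
          exact h4
        have hGmc : ContinuousAt (fun s : ℝ => Gm ((s:ℂ))) t := by
          have hGc : ContinuousAt Gm ((t:ℂ)) :=
            (hGm (t:ℂ) (by simpa using hmemR t htabs') (Or.inl (by simpa using htne))).continuousAt
          have h4 := ContinuousAt.comp (x := t) (by exact hGc)
            Complex.continuous_ofReal.continuousAt
          exact h4
        exact ((Complex.continuous_ofReal.comp hdhc).continuousAt).mul (hGpc.sub hGmc)
    have hint1 : IntervalIntegrable (fun s : ℝ => ((deriv h s : ℝ):ℂ) * (Gp ((s:ℂ)) - Gm ((s:ℂ))))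
        volume a ρ := by
      refine ContinuousOn.intervalIntegrable ?_
      intro t ht
      rw [Set.uIcc_of_le haρ.le] at ht
      refine (hcontE t ?_).continuousWithinAt
      rw [ha] at ht
      exact abs_le.mpr ⟨by linarith [ht.1], by linarith [ht.2]⟩
    have hint2 : IntervalIntegrable (fun s : ℝ => ((deriv h s : ℝ):ℂ) * (Gp ((s:ℂ)) - Gm ((s:ℂ))))
        volume ρ b := by
      refine ContinuousOn.intervalIntegrable ?_
      intro t ht
      rw [Set.uIcc_of_le hρb.le] at ht
      refine (hcontE t ?_).continuousWithinAt
      rw [hb] at ht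
      exact abs_le.mpr ⟨by linarith [ht.1], by linarith [ht.2]⟩
    rw [← intervalIntegral.integral_add_adjacent_intervals hint1 hint2]
    have hdiffh : ∀ x ∈ Set.uIcc a ρ ∪ Set.uIcc ρ b, DifferentiableAt ℝ h x :=
      fun x _ => (hsmooth.differentiable (by simp)).differentiableAt
    have hL : (∫ t in a..ρ, ((deriv h t : ℝ):ℂ) * (Gp ((t:ℂ)) - Gm ((t:ℂ)))) = cL := by
      have hcg : ∀ t ∈ Set.uIcc a ρ, ((deriv h t : ℝ):ℂ) * (Gp ((t:ℂ)) - Gm ((t:ℂ)))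
          = ((deriv h t : ℝ):ℂ) * cL := by
        intro t ht
        rw [Set.uIcc_of_le haρ.le] at ht
        by_cases hc : |t - ρ| < δ/2
        · rw [hone' t hc]
          simp
        · push_neg at hc
          have htlt : t < ρ := by
            rcases lt_or_eq_of_le ht.2 with h' | h'
            · exact h'
            · exfalso
              rw [h'] at hc
              simp only [sub_self, abs_zero] at hc
              linarith
          have habs : |t - ρ| ≤ 3*δ/2 := by
            rw [ha] at ht
            exact abs_le.mpr ⟨by linarith [ht.1], by linarith [ht.2]⟩
          rw [hconstL ((t:ℂ)) (by simpa using hmemR t habs) (by simpa using htlt)]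
      rw [intervalIntegral.integral_congr hcg, intervalIntegral.integral_mul_const,
        intervalIntegral.integral_ofReal,
        intervalIntegral.integral_deriv_eq_sub (fun x hx => (hsmooth.differentiable (by simp)).differentiableAt)
          (hdhc.intervalIntegrable _ _),
        hone ρ ⟨by linarith, by linarith⟩, hha]
      norm_num
    have hR : (∫ t in ρ..b, ((deriv h t : ℝ):ℂ) * (Gp ((t:ℂ)) - Gm ((t:ℂ)))) = -cR := by
      have hcg : ∀ t ∈ Set.uIcc ρ b, ((deriv h t : ℝ):ℂ) * (Gp ((t:ℂ)) - Gm ((t:ℂ)))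
          = ((deriv h t : ℝ):ℂ) * cR := by
        intro t ht
        rw [Set.uIcc_of_le hρb.le] at ht
        by_cases hc : |t - ρ| < δ/2
        · rw [hone' t hc]
          simp
        · push_neg at hc
          have htlt : ρ < t := by
            rcases lt_or_eq_of_le ht.1 with h' | h'
            · exact h'
            · exfalso
              rw [← h'] at hc
              simp only [sub_self, abs_zero] at hc
              linarith
          have habs : |t - ρ| ≤ 3*δ/2 := by
            rw [hb] at ht
            exact abs_le.mpr ⟨by linarith [ht.1], by linarith [ht.2]⟩
          rw [hconstR ((t:ℂ)) (by simpa using hmemR t habs) (by simpa using htlt)]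
      rw [intervalIntegral.integral_congr hcg, intervalIntegral.integral_mul_const,
        intervalIntegral.integral_ofReal,
        intervalIntegral.integral_deriv_eq_sub (fun x hx => (hsmooth.differentiable (by simp)).differentiableAt)
          (hdhc.intervalIntegrable _ _),
        hone ρ ⟨by linarith, by linarith⟩, hhb]
      push_cast
      ring
    rw [hL, hR]
    ring
  -- main limit
  have main : Tendsto
      (fun y : ℝ =>
        (((1 / Real.pi) * ∫ t : ℝ, h t * (φ ((t:ℂ) + (y:ℂ) * Complex.I)).im : ℝ) : ℂ))
      (𝓝[>] 0)
      (𝓝 (-((2 * Real.pi * Complex.I)⁻¹ * ∮ z in C((ρ : ℂ), δ / 2), φ z))) := by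
    have h1 : Tendsto (fun y : ℝ => (2*(Real.pi:ℂ)*Complex.I)⁻¹ * (- V y)) (𝓝[>] (0:ℝ))
        (𝓝 ((2*(Real.pi:ℂ)*Complex.I)⁻¹ * (-(cL - cR)))) := by
      rw [hE] at hVlim
      exact (hVlim.neg).const_mul _
    have h2 : -((2 * (Real.pi:ℂ) * Complex.I)⁻¹ * ∮ z in C((ρ : ℂ), δ / 2), φ z)
        = (2*(Real.pi:ℂ)*Complex.I)⁻¹ * (-(cL - cR)) := by
      rw [hcirc]; ring
    rw [h2]
    refine Tendsto.congr' ?_ h1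
    filter_upwards [Ioo_mem_nhdsGT (half_pos hδ)] with y hy
    exact (HA y hy).symm
  constructor
  · exact main
  · intro ψ hψa hψeq
    have hsphere : ∀ z ∈ Metric.sphere (ρ:ℂ) (δ/2), z ∈ ({z : ℂ | |z.re - ρ| < 2 * δ} \ {(ρ : ℂ)}) := by
      intro z hz
      rw [Metric.mem_sphere, Complex.dist_eq] at hz
      constructor
      · show |z.re - ρ| < 2*δ
        calc |z.re - ρ| = |(z - (ρ:ℂ)).re| := by simp
          _ ≤ ‖z - (ρ:ℂ)‖ := Complex.abs_re_le_norm _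
          _ = δ/2 := hz
          _ < 2*δ := by linarith
      · simp only [Set.mem_singleton_iff]
        intro hc
        rw [hc] at hz
        simp at hz
        linarith
    have hcong : (∮ z in C((ρ : ℂ), δ / 2), φ z) = ∮ z in C((ρ : ℂ), δ / 2), ψ z := by
      refine circleIntegral.integral_congr (by positivity) ?_
      intro z hz
      exact (hψeq (hsphere z hz)).symm
    have hψ0 : (∮ z in C((ρ : ℂ), δ / 2), ψ z) = 0 := by
      refine Complex.circleIntegral_eq_zero_of_differentiable_on_off_countable
        (by positivity) Set.countable_empty ?_ ?_
      · intro z hz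
        rw [Metric.mem_closedBall, Complex.dist_eq] at hz
        have hmem' : z ∈ {z : ℂ | |z.re - ρ| < 2 * δ} := by
          show |z.re - ρ| < 2*δ
          calc |z.re - ρ| = |(z - (ρ:ℂ)).re| := by simp
            _ ≤ ‖z - (ρ:ℂ)‖ := Complex.abs_re_le_norm _
            _ ≤ δ/2 := hz
            _ < 2*δ := by linarith
        exact (hψa z hmem').continuousAt.continuousWithinAt
      · intro z hz
        have hz' : ‖z - (ρ:ℂ)‖ < δ/2 := by
          have := hz.1
          rwa [Metric.mem_ball, Complex.dist_eq] at this
        have hmem' : z ∈ {z : ℂ | |z.re - ρ| < 2 * δ} := by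
          show |z.re - ρ| < 2*δ
          calc |z.re - ρ| = |(z - (ρ:ℂ)).re| := by simp
            _ ≤ ‖z - (ρ:ℂ)‖ := Complex.abs_re_le_norm _
            _ < δ/2 := hz'
            _ < 2*δ := by linarith
        exact (hψa z hmem').differentiableAt
    have hmain0 := main
    rw [hcong, hψ0, mul_zero, neg_zero] at hmain0
    have h3 := (Complex.continuous_re.tendsto 0).comp hmain0
    have heq : (fun y : ℝ => ((1 / Real.pi) * ∫ t : ℝ, h t * (φ ((t:ℂ) + (y:ℂ) * Complex.I)).im : ℝ))
        = (Complex.re ∘ fun y : ℝ =>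
          (((1 / Real.pi) * ∫ t : ℝ, h t * (φ ((t:ℂ) + (y:ℂ) * Complex.I)).im : ℝ) : ℂ)) := by
      funext y
      simp
    rw [heq]
    simpa using h3
end
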